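/- arXiv:2605.05160 — 4 statements merged into one kernel-verified Lean document; each statement's English description precedes it below -/
import Mathlib

section
/- Let A, Q_1, …, Q_N be finitely-valued random variables and let X = (X_1, …, X_K) be a finite family of finitely-valued random variables on a probability space (Ω, μ). Fix n ∈ {1, …, N} and assume H(A | (Q_n, X)) = 0 and I((Q_1, …, Q_N) ; X) = 0. Then for every subset U ⊆ {1, …, K}, one has H(A | ((Q_1, …, Q_N), (X_i)_{i∈U})) = H(A | (Q_n, (X_i)_{i∈U})). -/
open MeasureTheory ProbabilityTheory

/-- Shannon entropy (natural logarithm) of a finitely-valued random variable. -/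
noncomputable def rvH {Ω : Type*} [MeasurableSpace Ω] {S : Type*} [Fintype S]
    (μ : Measure Ω) (Y : Ω → S) : ℝ :=
  ∑ s : S, Real.negMulLog ((μ (Y ⁻¹' {s})).toReal)

/-- Conditional Shannon entropy `H(Y | Z)`. -/
noncomputable def rvCondH {Ω : Type*} [MeasurableSpace Ω] {S T : Type*} [Fintype S] [Fintype T]
    (μ : Measure Ω) (Y : Ω → S) (Z : Ω → T) : ℝ :=
  rvH μ (fun ω => (Y ω, Z ω)) - rvH μ Z

/-- Mutual information `I(Y ; Z)`. -/
noncomputable def rvMI {Ω : Type*} [MeasurableSpace Ω] {S T : Type*} [Fintype S] [Fintype T]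
    (μ : Measure Ω) (Y : Ω → S) (Z : Ω → T) : ℝ :=
  rvH μ Y + rvH μ Z - rvH μ (fun ω => (Y ω, Z ω))

/-- Measurability of a random variable with (discrete) finitely-valued codomain. -/
def DMeasurable {Ω : Type*} [MeasurableSpace Ω] {S : Type*} (Y : Ω → S) : Prop :=
  ∀ s : Set S, MeasurableSet (Y ⁻¹' s)


set_option linter.unusedSectionVars false
set_option linter.dupNamespace false
set_option maxHeartbeats 2000000

open Finset Real


namespace Stmt1Aux

variable {S T V W : Type*}

open Classical in
/-- Pushforward of a weight function along a map. -/
noncomputable def jointOf [Fintype S] (p : S → ℝ) (f : S → T) : T → ℝ :=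
  fun t => ∑ s : S, if f s = t then p s else 0

/-- Entropy of a weight function. -/
noncomputable def ent [Fintype T] (q : T → ℝ) : ℝ := ∑ t, Real.negMulLog (q t)

/-- Entropy of the pushforward. -/
noncomputable def entOf [Fintype S] [Fintype T] (p : S → ℝ) (f : S → T) : ℝ :=
  ent (jointOf p f)

variable [Fintype S] [Fintype T] [Fintype V] [Fintype W]

lemma jointOf_nonneg {p : S → ℝ} (hp : ∀ s, 0 ≤ p s) (f : S → T) (t : T) :
    0 ≤ jointOf p f t := by
  classical
  refine Finset.sum_nonneg fun s _ => ?_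
  split <;> simp [hp s]

lemma sum_jointOf (p : S → ℝ) (f : S → T) : ∑ t, jointOf p f t = ∑ s, p s := by
  classical
  unfold jointOf
  rw [Finset.sum_comm]
  simp

lemma jointOf_comp (p : S → ℝ) (f : S → T) (h : T → V) (v : V) :
    jointOf p (fun s => h (f s)) v = jointOf (jointOf p f) h v := by
  classical
  unfold jointOf
  have : ∀ t : T, (if h t = v then ∑ s : S, if f s = t then p s else 0 else 0)
      = ∑ s : S, if f s = t then (if h (f s) = v then p s else 0) else 0 := by
    intro t
    by_cases ht : h t = v
    · simp only [ht, if_true]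
      exact Finset.sum_congr rfl fun s _ => by by_cases hf : f s = t <;> simp [hf, ht]
    · simp only [ht, if_false]
      refine (Finset.sum_eq_zero fun s _ => ?_).symm
      by_cases hf : f s = t <;> simp [hf, ht]
  simp only [this]
  rw [Finset.sum_comm]
  exact Finset.sum_congr rfl fun s _ => by
    rw [Finset.sum_ite_eq univ (f s) (fun _ => if h (f s) = v then p s else 0)]
    simp

lemma entOf_comp (p : S → ℝ) (f : S → T) (h : T → V) :
    entOf p (fun s => h (f s)) = entOf (jointOf p f) h := by
  unfold entOf ent
  exact Finset.sum_congr rfl fun v _ => by rw [jointOf_comp]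

lemma negMulLog_sum_le {ι : Type*} [Fintype ι] (f : ι → ℝ) (hf : ∀ i, 0 ≤ f i) :
    Real.negMulLog (∑ i, f i) ≤ ∑ i, Real.negMulLog (f i) := by
  have hT : ∀ i : ι, -(f i * Real.log (∑ j, f j)) ≤ Real.negMulLog (f i) := by
    intro i
    rcases eq_or_lt_of_le (hf i) with h0 | h0
    · simp [← h0]
    · have hle : f i ≤ ∑ j, f j := Finset.single_le_sum (fun j _ => hf j) (Finset.mem_univ i)
      have := Real.log_le_log h0 hle
      unfold Real.negMulLog
      nlinarith
  calc Real.negMulLog (∑ i, f i) = ∑ i, -(f i * Real.log (∑ j, f j)) := by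
        unfold Real.negMulLog
        rw [show (-∑ i : ι, f i) * Real.log (∑ i : ι, f i) = ∑ i : ι, -(f i * Real.log (∑ j : ι, f j)) by
          rw [← Finset.sum_neg_distrib, Finset.sum_congr rfl fun i _ => (neg_mul _ _).symm, ← Finset.sum_mul]]
    _ ≤ ∑ i, Real.negMulLog (f i) := Finset.sum_le_sum fun i _ => hT i

lemma gibbs {ι : Type*} [Fintype ι] (a b : ι → ℝ) (ha : ∀ i, 0 ≤ a i) (hb : ∀ i, 0 ≤ b i)
    (hab : ∀ i, a i ≠ 0 → b i ≠ 0) (hba : ∑ i, b i ≤ ∑ i, a i) :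
    ∑ i, a i * Real.log (b i / a i) ≤ 0 := by
  have key : ∀ i : ι, a i * Real.log (b i / a i) ≤ b i - a i := by
    intro i
    rcases eq_or_lt_of_le (ha i) with h0 | h0
    · simp [← h0, hb i]
    · have hbpos : 0 < b i := lt_of_le_of_ne (hb i) (Ne.symm (hab i (ne_of_gt h0)))
      have hdiv : 0 < b i / a i := div_pos hbpos h0
      have := Real.log_le_sub_one_of_pos hdiv
      have h2 : a i * Real.log (b i / a i) ≤ a i * (b i / a i - 1) :=
        mul_le_mul_of_nonneg_left this (le_of_lt h0)
      have h3 : a i * (b i / a i - 1) = b i - a i := by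
        field_simp
      linarith
  calc ∑ i, a i * Real.log (b i / a i) ≤ ∑ i, (b i - a i) := Finset.sum_le_sum fun i _ => key i
    _ = ∑ i, b i - ∑ i, a i := Finset.sum_sub_distrib _ _
    _ ≤ 0 := by linarith

variable {S T V W : Type*} [Fintype S] [Fintype T] [Fintype V] [Fintype W]

lemma ent_jointOf_le {q : T → ℝ} (hq : ∀ t, 0 ≤ q t) (h : T → V) :
    ent (jointOf q h) ≤ ent q := by
  classical
  unfold ent jointOf
  calc ∑ v, Real.negMulLog (∑ t : T, if h t = v then q t else 0)
      ≤ ∑ v, ∑ t : T, Real.negMulLog (if h t = v then q t else 0) :=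
        Finset.sum_le_sum fun v _ => negMulLog_sum_le _ (fun t => by split <;> simp [hq t])
    _ = ∑ v, ∑ t : T, (if h t = v then Real.negMulLog (q t) else 0) := by
        refine Finset.sum_congr rfl fun v _ => Finset.sum_congr rfl fun t _ => ?_
        split <;> simp
    _ = ∑ t : T, ∑ v, (if h t = v then Real.negMulLog (q t) else 0) := Finset.sum_comm
    _ = ∑ t : T, Real.negMulLog (q t) := by
        refine Finset.sum_congr rfl fun t _ => ?_
        rw [Finset.sum_ite_eq univ (h t) (fun _ => Real.negMulLog (q t))]
        simp

lemma ent_jointOf_injective (q : T → ℝ) {e : T → V} (he : Function.Injective e) :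
    ent (jointOf q e) = ent q := by
  classical
  unfold ent jointOf
  have h1 : ∀ t : T, (∑ t' : T, if e t' = e t then q t' else 0) = q t := by
    intro t
    rw [Finset.sum_congr rfl fun t' _ => by rw [show (if e t' = e t then q t' else 0)
      = (if t' = t then q t' else 0) by simp [he.eq_iff]]]
    rw [Finset.sum_ite_eq' univ t q]
    simp
  set G : V → ℝ := fun v => Real.negMulLog (∑ t' : T, if e t' = v then q t' else 0) with hG
  have himg : ∑ v ∈ Finset.univ.image e, G v = ∑ t : T, G (e t) :=
    Finset.sum_image (fun a _ b _ h => he h)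
  have hsub : ∑ v ∈ Finset.univ.image e, G v = ∑ v : V, G v := by
    refine Finset.sum_subset (Finset.subset_univ _) ?_
    intro v _ hv
    simp only [Finset.mem_image, Finset.mem_univ, true_and] at hv
    have hz : ∀ t' : T, (if e t' = v then q t' else 0) = 0 := fun t' => by
      rw [if_neg (fun h => hv ⟨t', h⟩)]
    simp [hG, Finset.sum_congr rfl fun t' _ => hz t']
  rw [← hsub, himg]
  exact Finset.sum_congr rfl fun t _ => by rw [hG]; simp only []; rw [h1 t]

lemma entOf_mono {p : S → ℝ} (hp : ∀ s, 0 ≤ p s) (f : S → T) (h : T → V) :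
    entOf p (fun s => h (f s)) ≤ entOf p f := by
  rw [entOf_comp]
  exact ent_jointOf_le (jointOf_nonneg hp f) h

lemma entOf_relabel (p : S → ℝ) (f : S → T) {e : T → V} (he : Function.Injective e) :
    entOf p (fun s => e (f s)) = entOf p f := by
  rw [entOf_comp]
  exact ent_jointOf_injective _ he

lemma entOf_const_unit {p : S → ℝ} (hp1 : ∑ s, p s = 1) :
    entOf p (fun _ => ()) = 0 := by
  classical
  unfold entOf ent jointOf
  simp [hp1]


lemma sum_rot {α β γ : Type*} [Fintype α] [Fintype β] [Fintype γ] (f : α → β → γ → ℝ) :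
    ∑ a, ∑ b, ∑ c, f a b c = ∑ c, ∑ a, ∑ b, f a b c := by
  calc ∑ a, ∑ b, ∑ c, f a b c = ∑ a, ∑ c, ∑ b, f a b c :=
        Finset.sum_congr rfl fun a _ => Finset.sum_comm
    _ = ∑ c, ∑ a, ∑ b, f a b c := Finset.sum_comm

lemma submod_core (q : T → V → W → ℝ) (hq : ∀ t v w, 0 ≤ q t v w) :
    (∑ t, ∑ v, ∑ w, Real.negMulLog (q t v w)) + (∑ w, Real.negMulLog (∑ t, ∑ v, q t v w))
      ≤ (∑ t, ∑ w, Real.negMulLog (∑ v, q t v w))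
        + (∑ v, ∑ w, Real.negMulLog (∑ t, q t v w)) := by
  classical
  set m13 : T → W → ℝ := fun t w => ∑ v, q t v w with hm13
  set m23 : V → W → ℝ := fun v w => ∑ t, q t v w with hm23
  set m3 : W → ℝ := fun w => ∑ t, ∑ v, q t v w with hm3
  have hm13n : ∀ t w, 0 ≤ m13 t w := fun t w => Finset.sum_nonneg fun v _ => hq t v w
  have hm23n : ∀ v w, 0 ≤ m23 v w := fun v w => Finset.sum_nonneg fun t _ => hq t v w
  have hm3n : ∀ w, 0 ≤ m3 w := fun w =>
    Finset.sum_nonneg fun t _ => Finset.sum_nonneg fun v _ => hq t v w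
  have hq13 : ∀ t v w, q t v w ≤ m13 t w := fun t v w =>
    Finset.single_le_sum (fun v _ => hq t v w) (Finset.mem_univ v)
  have hq23 : ∀ t v w, q t v w ≤ m23 v w := fun t v w =>
    Finset.single_le_sum (fun t _ => hq t v w) (Finset.mem_univ t)
  have h13le3 : ∀ t w, m13 t w ≤ m3 w := fun t w =>
    Finset.single_le_sum (fun t _ => hm13n t w) (Finset.mem_univ t)
  have hsum23 : ∀ w, ∑ v, m23 v w = m3 w := fun w => Finset.sum_comm
  -- the two weight functions on the product type
  set a : T × V × W → ℝ := fun x => q x.1 x.2.1 x.2.2 with ha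
  set b : T × V × W → ℝ := fun x => m13 x.1 x.2.2 * m23 x.2.1 x.2.2 / m3 x.2.2 with hb
  have han : ∀ x, 0 ≤ a x := fun x => hq _ _ _
  have hbn : ∀ x, 0 ≤ b x := fun x =>
    div_nonneg (mul_nonneg (hm13n _ _) (hm23n _ _)) (hm3n _)
  have habpos : ∀ x, a x ≠ 0 → 0 < m13 x.1 x.2.2 ∧ 0 < m23 x.2.1 x.2.2 ∧ 0 < m3 x.2.2 := by
    intro x hx
    have h0 : 0 < a x := lt_of_le_of_ne (han x) (Ne.symm hx)
    refine ⟨lt_of_lt_of_le h0 (hq13 _ _ _), lt_of_lt_of_le h0 (hq23 _ _ _),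
      lt_of_lt_of_le (lt_of_lt_of_le h0 (hq13 _ _ _)) (h13le3 _ _)⟩
  have hab : ∀ x, a x ≠ 0 → b x ≠ 0 := by
    intro x hx
    obtain ⟨h1, h2, h3⟩ := habpos x hx
    exact ne_of_gt (div_pos (mul_pos h1 h2) h3)
  have hsumb : ∑ x, b x = ∑ x, a x := by
    simp only [Fintype.sum_prod_type, ha, hb]
    rw [sum_rot (fun t v w => m13 t w * m23 v w / m3 w), sum_rot (fun t v w => q t v w)]
    refine Finset.sum_congr rfl fun w _ => ?_
    have hL : ∑ t, ∑ v, m13 t w * m23 v w / m3 w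
        = (∑ t, m13 t w) * (∑ v, m23 v w) / m3 w := by
      rw [Finset.sum_mul, Finset.sum_div]
      refine Finset.sum_congr rfl fun t _ => ?_
      rw [Finset.mul_sum, Finset.sum_div]
    have hR : ∑ t, ∑ v, q t v w = m3 w := rfl
    have hT : (∑ t, m13 t w) * (∑ v, m23 v w) / m3 w = m3 w * m3 w / m3 w := by
      rw [hsum23 w]
    rw [hL, hR, hT]
    rcases eq_or_ne (m3 w) 0 with h0 | h0
    · rw [h0]; simp
    · field_simp
  have hgibbs : ∑ x, a x * Real.log (b x / a x) ≤ 0 :=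
    gibbs a b han hbn hab (le_of_eq hsumb)
  -- expand the Gibbs sum
  have hterm : ∀ x : T × V × W, a x * Real.log (b x / a x)
      = a x * Real.log (m13 x.1 x.2.2) + a x * Real.log (m23 x.2.1 x.2.2)
        - a x * Real.log (m3 x.2.2) - a x * Real.log (a x) := by
    intro x
    rcases eq_or_ne (a x) 0 with h0 | h0
    · rw [h0]; ring
    · obtain ⟨h1, h2, h3⟩ := habpos x h0
      have hax : 0 < a x := lt_of_le_of_ne (han x) (Ne.symm h0)
      rw [hb]
      rw [Real.log_div (hab x h0) h0, Real.log_div (ne_of_gt (mul_pos h1 h2)) (ne_of_gt h3),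
        Real.log_mul (ne_of_gt h1) (ne_of_gt h2)]
      ring
  rw [Finset.sum_congr rfl fun x _ => hterm x] at hgibbs
  have hsplit : (∑ x : T × V × W, (a x * Real.log (m13 x.1 x.2.2)
        + a x * Real.log (m23 x.2.1 x.2.2) - a x * Real.log (m3 x.2.2)
        - a x * Real.log (a x)))
      = (∑ x : T × V × W, a x * Real.log (m13 x.1 x.2.2))
        + (∑ x : T × V × W, a x * Real.log (m23 x.2.1 x.2.2))
        - (∑ x : T × V × W, a x * Real.log (m3 x.2.2))
        - (∑ x : T × V × W, a x * Real.log (a x)) := by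
    rw [← Finset.sum_add_distrib, ← Finset.sum_sub_distrib, ← Finset.sum_sub_distrib]
  rw [hsplit] at hgibbs
  -- identify the four marginal sums
  have e13 : ∑ x : T × V × W, a x * Real.log (m13 x.1 x.2.2)
      = -(∑ t, ∑ w, Real.negMulLog (m13 t w)) := by
    simp only [Fintype.sum_prod_type, ha]
    rw [← Finset.sum_neg_distrib]
    refine Finset.sum_congr rfl fun t _ => ?_
    rw [Finset.sum_comm, ← Finset.sum_neg_distrib]
    refine Finset.sum_congr rfl fun w _ => ?_
    rw [← Finset.sum_mul]
    have : ∑ v, q t v w = m13 t w := rfl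
    rw [this]
    simp [Real.negMulLog]
  have e23 : ∑ x : T × V × W, a x * Real.log (m23 x.2.1 x.2.2)
      = -(∑ v, ∑ w, Real.negMulLog (m23 v w)) := by
    simp only [Fintype.sum_prod_type, ha]
    rw [Finset.sum_comm, ← Finset.sum_neg_distrib]
    refine Finset.sum_congr rfl fun v _ => ?_
    rw [Finset.sum_comm, ← Finset.sum_neg_distrib]
    refine Finset.sum_congr rfl fun w _ => ?_
    rw [← Finset.sum_mul]
    have : ∑ t, q t v w = m23 v w := rfl
    rw [this]
    simp [Real.negMulLog]
  have e3 : ∑ x : T × V × W, a x * Real.log (m3 x.2.2)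
      = -(∑ w, Real.negMulLog (m3 w)) := by
    simp only [Fintype.sum_prod_type, ha]
    rw [sum_rot (fun t v w => q t v w * Real.log (m3 w)), ← Finset.sum_neg_distrib]
    refine Finset.sum_congr rfl fun w _ => ?_
    rw [show ∑ t, ∑ v, q t v w * Real.log (m3 w)
        = (∑ t, ∑ v, q t v w) * Real.log (m3 w) by
      rw [Finset.sum_mul]
      exact Finset.sum_congr rfl fun t _ => by rw [Finset.sum_mul]]
    have : ∑ t, ∑ v, q t v w = m3 w := rfl
    rw [this]
    simp [Real.negMulLog]
  have efull : ∑ x : T × V × W, a x * Real.log (a x)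
      = -(∑ t, ∑ v, ∑ w, Real.negMulLog (q t v w)) := by
    simp only [Fintype.sum_prod_type, ha]
    rw [← Finset.sum_neg_distrib]
    refine Finset.sum_congr rfl fun t _ => ?_
    rw [← Finset.sum_neg_distrib]
    refine Finset.sum_congr rfl fun v _ => ?_
    rw [← Finset.sum_neg_distrib]
    refine Finset.sum_congr rfl fun w _ => ?_
    simp [Real.negMulLog]
  rw [e13, e23, e3, efull] at hgibbs
  linarith


lemma ite_and_comm (P Q : Prop) [Decidable P] [Decidable Q] (r : ℝ) :
    (if P ∧ Q then r else 0) = if Q then (if P then r else 0) else 0 := by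
  by_cases hp : P <;> by_cases hq : Q <;> simp [hp, hq]

lemma jointOf_p13 (Jq : T × V × W → ℝ) (t : T) (w0 : W) :
    jointOf Jq (fun x => (x.1, x.2.2)) (t, w0) = ∑ v, Jq (t, v, w0) := by
  classical
  unfold jointOf
  simp only [Fintype.sum_prod_type, Prod.mk.injEq, ite_and_comm]
  simp only [Finset.sum_ite_eq', Finset.mem_univ, if_true]
  rw [Finset.sum_comm]
  simp [Finset.sum_ite_eq']

lemma jointOf_p23 (Jq : T × V × W → ℝ) (v : V) (w0 : W) :
    jointOf Jq (fun x => x.2) (v, w0) = ∑ t, Jq (t, v, w0) := by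
  classical
  unfold jointOf
  simp only [Fintype.sum_prod_type, Prod.mk.injEq, ite_and_comm]
  simp [Finset.sum_ite_eq, Finset.sum_ite_eq']

lemma jointOf_p3 (Jq : T × V × W → ℝ) (w0 : W) :
    jointOf Jq (fun x => x.2.2) w0 = ∑ t, ∑ v, Jq (t, v, w0) := by
  classical
  unfold jointOf
  simp [Fintype.sum_prod_type, Finset.sum_ite_eq, Finset.sum_ite_eq']

lemma submod {p : S → ℝ} (hp : ∀ s, 0 ≤ p s) (f : S → T) (g : S → V) (w : S → W) :
    entOf p (fun s => (f s, g s, w s)) + entOf p w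
      ≤ entOf p (fun s => (f s, w s)) + entOf p (fun s => (g s, w s)) := by
  classical
  set Jq := jointOf p (fun s => (f s, g s, w s)) with hJq
  have hJq0 : ∀ x, 0 ≤ Jq x := jointOf_nonneg hp _
  have core := submod_core (fun t v w0 => Jq (t, v, w0)) (fun t v w0 => hJq0 _)
  have h123 : entOf p (fun s => (f s, g s, w s))
      = ∑ t, ∑ v, ∑ w0, Real.negMulLog (Jq (t, v, w0)) := by
    unfold entOf ent
    rw [Fintype.sum_prod_type]
    exact Finset.sum_congr rfl fun t _ => Fintype.sum_prod_type _
  have h3 : entOf p w = ∑ w0, Real.negMulLog (∑ t, ∑ v, Jq (t, v, w0)) := by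
    have : entOf p w = entOf Jq (fun x => x.2.2) :=
      entOf_comp p (fun s => (f s, g s, w s)) (fun x => x.2.2)
    rw [this]
    unfold entOf ent
    exact Finset.sum_congr rfl fun w0 _ => by rw [jointOf_p3]
  have h13 : entOf p (fun s => (f s, w s))
      = ∑ t, ∑ w0, Real.negMulLog (∑ v, Jq (t, v, w0)) := by
    have : entOf p (fun s => (f s, w s)) = entOf Jq (fun x => (x.1, x.2.2)) :=
      entOf_comp p (fun s => (f s, g s, w s)) (fun x => (x.1, x.2.2))
    rw [this]
    unfold entOf ent
    rw [Fintype.sum_prod_type]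
    exact Finset.sum_congr rfl fun t _ => Finset.sum_congr rfl fun w0 _ => by rw [jointOf_p13]
  have h23 : entOf p (fun s => (g s, w s))
      = ∑ v, ∑ w0, Real.negMulLog (∑ t, Jq (t, v, w0)) := by
    have : entOf p (fun s => (g s, w s)) = entOf Jq (fun x => x.2) :=
      entOf_comp p (fun s => (f s, g s, w s)) (fun x => x.2)
    rw [this]
    unfold entOf ent
    rw [Fintype.sum_prod_type]
    exact Finset.sum_congr rfl fun v _ => Finset.sum_congr rfl fun w0 _ => by rw [jointOf_p23]
  rw [h123, h3, h13, h23]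
  exact core

lemma subadd {p : S → ℝ} (hp : ∀ s, 0 ≤ p s) (hp1 : ∑ s, p s = 1) (f : S → T) (g : S → V) :
    entOf p (fun s => (f s, g s)) ≤ entOf p f + entOf p g := by
  have h := submod hp f g (fun _ => ())
  have e1 : entOf p (fun s => (f s, g s, ())) = entOf p (fun s => (f s, g s)) :=
    entOf_relabel p (fun s => (f s, g s)) (e := fun y => (y.1, y.2, ()))
      (fun y1 y2 hy => by simpa [Prod.ext_iff] using hy)
  have e2 : entOf p (fun s => (f s, ())) = entOf p f :=
    entOf_relabel p f (e := fun y => (y, ())) (fun y1 y2 hy => by simpa [Prod.ext_iff] using hy)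
  have e3 : entOf p (fun s => (g s, ())) = entOf p g :=
    entOf_relabel p g (e := fun y => (y, ())) (fun y1 y2 hy => by simpa [Prod.ext_iff] using hy)
  have e4 : entOf p (fun _ : S => ()) = 0 := entOf_const_unit hp1
  rw [e1, e2, e3, e4] at h
  linarith


open MeasureTheory in
lemma measure_preimage_eq_sum {Ω : Type*} [MeasurableSpace Ω] (μ : Measure Ω)
    [IsProbabilityMeasure μ] {S : Type*} [Fintype S] (J : Ω → S)
    (hJ : ∀ s : S, MeasurableSet (J ⁻¹' {s})) (E : Finset S) :
    (μ (J ⁻¹' ↑E)).toReal = ∑ s ∈ E, (μ (J ⁻¹' {s})).toReal := by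
  classical
  have hset : J ⁻¹' ↑E = ⋃ s ∈ E, J ⁻¹' {s} := by
    ext ω
    simp
  rw [hset, measure_biUnion_finset ?disj (fun s _ => hJ s)]
  · exact ENNReal.toReal_sum fun s _ => measure_ne_top μ _
  case disj =>
    intro s1 h1 s2 h2 hne
    refine Set.disjoint_left.mpr fun ω hω1 hω2 => ?_
    exact hne (by rw [← hω1, ← hω2])

open MeasureTheory in
lemma rvH_eq_entOf {Ω : Type*} [MeasurableSpace Ω] (μ : Measure Ω) [IsProbabilityMeasure μ]
    {S T : Type*} [Fintype S] [Fintype T] (J : Ω → S)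
    (hJ : ∀ s : S, MeasurableSet (J ⁻¹' {s})) (f : S → T) :
    rvH μ (fun ω => f (J ω)) = entOf (fun s => (μ (J ⁻¹' {s})).toReal) f := by
  classical
  unfold rvH entOf ent jointOf
  refine Finset.sum_congr rfl fun t _ => ?_
  congr 1
  have hset : (fun ω => f (J ω)) ⁻¹' {t} = J ⁻¹' ↑(Finset.univ.filter (fun s => f s = t)) := by
    ext ω
    simp
  rw [hset, measure_preimage_eq_sum μ J hJ, Finset.sum_filter]

open MeasureTheory in
lemma sum_dist_eq_one {Ω : Type*} [MeasurableSpace Ω] (μ : Measure Ω) [IsProbabilityMeasure μ]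
    {S : Type*} [Fintype S] (J : Ω → S) (hJ : ∀ s : S, MeasurableSet (J ⁻¹' {s})) :
    ∑ s : S, (μ (J ⁻¹' {s})).toReal = 1 := by
  classical
  have := measure_preimage_eq_sum μ J hJ Finset.univ
  simp only [Finset.coe_univ, Set.preimage_univ] at this
  rw [← this]
  simp

end Stmt1Aux

open Stmt1Aux in
/-- Lemma 2 of the paper: if the answer `A` is a deterministic function of
`(Q_n, X)` (i.e., `H(A | (Q_n, X)) = 0`) and the queries `(Q_1, …, Q_N)` are independent of the
messages `X` (i.e., `I((Q_1, …, Q_N) ; X) = 0`), then for every subset `U` of message indices,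
`H(A | ((Q_1, …, Q_N), X_U)) = H(A | (Q_n, X_U))`. -/
theorem stmt1 {Ω : Type*} [MeasurableSpace Ω] (μ : Measure Ω) [IsProbabilityMeasure μ]
    {𝒜 𝒬 𝒳 : Type*} [Fintype 𝒜] [Fintype 𝒬] [Fintype 𝒳] {N K : ℕ}
    (A : Ω → 𝒜) (Q : Fin N → Ω → 𝒬) (X : Fin K → Ω → 𝒳)
    (hAm : DMeasurable A) (hQm : ∀ n, DMeasurable (Q n)) (hXm : ∀ i, DMeasurable (X i))
    (n : Fin N)
    (hdet : rvCondH μ A (fun ω => (Q n ω, fun i => X i ω)) = 0)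
    (hqi : rvMI μ (fun ω (m : Fin N) => Q m ω) (fun ω (i : Fin K) => X i ω) = 0)
    (U : Finset (Fin K)) :
    rvCondH μ A (fun ω => ((fun m : Fin N => Q m ω), fun i : U => X i.1 ω)) =
      rvCondH μ A (fun ω => (Q n ω, fun i : U => X i.1 ω)) := by
  classical
  set J : Ω → 𝒜 × (Fin N → 𝒬) × (Fin K → 𝒳) :=
    fun ω => (A ω, fun m => Q m ω, fun i => X i ω) with hJdef
  have hJ : ∀ s, MeasurableSet (J ⁻¹' {s}) := by
    intro s
    have hset : J ⁻¹' {s} = A ⁻¹' {s.1} ∩ ((⋂ m, Q m ⁻¹' {s.2.1 m}) ∩ ⋂ i, X i ⁻¹' {s.2.2 i}) := by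
      ext ω
      simp [hJdef, Prod.ext_iff, funext_iff]
    rw [hset]
    exact (hAm _).inter ((MeasurableSet.iInter fun m => hQm m _).inter
      (MeasurableSet.iInter fun i => hXm i _))
  set P : 𝒜 × (Fin N → 𝒬) × (Fin K → 𝒳) → ℝ := fun s => (μ (J ⁻¹' {s})).toReal with hPdef
  have hP0 : ∀ s, 0 ≤ P s := fun s => ENNReal.toReal_nonneg
  have hP1 : ∑ s, P s = 1 := sum_dist_eq_one μ J hJ
  simp only [rvCondH, rvMI] at hdet hqi ⊢
  -- bridge equations between `rvH` and `entOf P`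
  have g1 : (rvH μ fun ω => (A ω, fun m => Q m ω, fun i : U => X i.1 ω))
      = entOf P (fun s => (s.1, s.2.1, fun i : U => s.2.2 i.1)) :=
    rvH_eq_entOf μ J hJ (fun s => (s.1, s.2.1, fun i : U => s.2.2 i.1))
  have g2 : (rvH μ fun ω => ((fun m => Q m ω), fun i : U => X i.1 ω))
      = entOf P (fun s => (s.2.1, fun i : U => s.2.2 i.1)) :=
    rvH_eq_entOf μ J hJ (fun s => (s.2.1, fun i : U => s.2.2 i.1))
  have g3 : (rvH μ fun ω => (A ω, Q n ω, fun i : U => X i.1 ω))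
      = entOf P (fun s => (s.1, s.2.1 n, fun i : U => s.2.2 i.1)) :=
    rvH_eq_entOf μ J hJ (fun s => (s.1, s.2.1 n, fun i : U => s.2.2 i.1))
  have g4 : (rvH μ fun ω => (Q n ω, fun i : U => X i.1 ω))
      = entOf P (fun s => (s.2.1 n, fun i : U => s.2.2 i.1)) :=
    rvH_eq_entOf μ J hJ (fun s => (s.2.1 n, fun i : U => s.2.2 i.1))
  have g5 : (rvH μ fun ω => (A ω, Q n ω, fun i => X i ω))
      = entOf P (fun s => (s.1, s.2.1 n, s.2.2)) :=
    rvH_eq_entOf μ J hJ (fun s => (s.1, s.2.1 n, s.2.2))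
  have g6 : (rvH μ fun ω => (Q n ω, fun i => X i ω))
      = entOf P (fun s => (s.2.1 n, s.2.2)) :=
    rvH_eq_entOf μ J hJ (fun s => (s.2.1 n, s.2.2))
  have g7 : (rvH μ fun ω (m : Fin N) => Q m ω) = entOf P (fun s => s.2.1) :=
    rvH_eq_entOf μ J hJ (fun s => s.2.1)
  have g8 : (rvH μ fun ω (i : Fin K) => X i ω) = entOf P (fun s => s.2.2) :=
    rvH_eq_entOf μ J hJ (fun s => s.2.2)
  have g9 : (rvH μ fun ω => ((fun m => Q m ω), fun i => X i ω))
      = entOf P (fun s => (s.2.1, s.2.2)) :=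
    rvH_eq_entOf μ J hJ (fun s => (s.2.1, s.2.2))
  rw [g5, g6] at hdet
  rw [g7, g8, g9] at hqi
  rw [g1, g2, g3, g4]
  -- entropy inequalities at the distribution level
  -- (i)  H(A,Q,X_U) + H(Q_n,X_U) ≤ H(A,Q_n,X_U) + H(Q,X_U)
  have s1 : entOf P (fun s => (s.1, s.2.1, s.2.1 n, fun i : U => s.2.2 i.1))
        + entOf P (fun s => (s.2.1 n, fun i : U => s.2.2 i.1))
      ≤ entOf P (fun s => (s.1, s.2.1 n, fun i : U => s.2.2 i.1))
        + entOf P (fun s => (s.2.1, s.2.1 n, fun i : U => s.2.2 i.1)) :=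
    submod hP0 _ _ _
  have r1 : entOf P (fun s => (s.1, s.2.1, s.2.1 n, fun i : U => s.2.2 i.1))
      = entOf P (fun s => (s.1, s.2.1, fun i : U => s.2.2 i.1)) :=
    entOf_relabel P (fun s => (s.1, s.2.1, fun i : U => s.2.2 i.1)) (e := fun y : 𝒜 × (Fin N → 𝒬) × (U → 𝒳) => (y.1, y.2.1, y.2.1 n, y.2.2))
      (fun y1 y2 h => by simp only [Prod.mk.injEq] at h; simp [Prod.ext_iff]; tauto)
  have r2 : entOf P (fun s => (s.2.1, s.2.1 n, fun i : U => s.2.2 i.1))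
      = entOf P (fun s => (s.2.1, fun i : U => s.2.2 i.1)) :=
    entOf_relabel P (fun s => (s.2.1, fun i : U => s.2.2 i.1)) (e := fun y : (Fin N → 𝒬) × (U → 𝒳) => (y.1, y.1 n, y.2))
      (fun y1 y2 h => by simp only [Prod.mk.injEq] at h; simp [Prod.ext_iff]; tauto)
  -- (ii)  H(A,Q,X) = H(Q,X)
  have s2 : entOf P (fun s => (s.1, s.2.1, s.2.1 n, s.2.2))
        + entOf P (fun s => (s.2.1 n, s.2.2))
      ≤ entOf P (fun s => (s.1, s.2.1 n, s.2.2))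
        + entOf P (fun s => (s.2.1, s.2.1 n, s.2.2)) :=
    submod hP0 _ _ _
  have r3 : entOf P (fun s => (s.1, s.2.1, s.2.1 n, s.2.2))
      = entOf P (fun s => (s.1, s.2.1, s.2.2)) :=
    entOf_relabel P (fun s => (s.1, s.2.1, s.2.2)) (e := fun y : 𝒜 × (Fin N → 𝒬) × (Fin K → 𝒳) => (y.1, y.2.1, y.2.1 n, y.2.2))
      (fun y1 y2 h => by simp only [Prod.mk.injEq] at h; simp [Prod.ext_iff]; tauto)
  have r4 : entOf P (fun s => (s.2.1, s.2.1 n, s.2.2))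
      = entOf P (fun s => (s.2.1, s.2.2)) :=
    entOf_relabel P (fun s => (s.2.1, s.2.2)) (e := fun y : (Fin N → 𝒬) × (Fin K → 𝒳) => (y.1, y.1 n, y.2))
      (fun y1 y2 h => by simp only [Prod.mk.injEq] at h; simp [Prod.ext_iff]; tauto)
  have m1 : entOf P (fun s => (s.2.1, s.2.2)) ≤ entOf P (fun s => (s.1, s.2.1, s.2.2)) :=
    entOf_mono hP0 (fun s => (s.1, s.2.1, s.2.2)) (fun y : 𝒜 × (Fin N → 𝒬) × (Fin K → 𝒳) => y.2)
  -- (iii) independence of Q_n and X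
  have s3 : entOf P (fun s => (s.2.1, s.2.2, s.2.1 n))
        + entOf P (fun s => s.2.1 n)
      ≤ entOf P (fun s => (s.2.1, s.2.1 n))
        + entOf P (fun s => (s.2.2, s.2.1 n)) :=
    submod hP0 _ _ _
  have r5 : entOf P (fun s => (s.2.1, s.2.2, s.2.1 n))
      = entOf P (fun s => (s.2.1, s.2.2)) :=
    entOf_relabel P (fun s => (s.2.1, s.2.2)) (e := fun y : (Fin N → 𝒬) × (Fin K → 𝒳) => (y.1, y.2, y.1 n))
      (fun y1 y2 h => by simp only [Prod.mk.injEq] at h; simp [Prod.ext_iff]; tauto)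
  have r6 : entOf P (fun s => (s.2.1, s.2.1 n)) = entOf P (fun s => s.2.1) :=
    entOf_relabel P (fun s => s.2.1) (e := fun y : Fin N → 𝒬 => (y, y n))
      (fun y1 y2 h => by simp only [Prod.mk.injEq] at h; tauto)
  have r7 : entOf P (fun s => (s.2.2, s.2.1 n)) = entOf P (fun s => (s.2.1 n, s.2.2)) :=
    entOf_relabel P (fun s => (s.2.1 n, s.2.2)) (e := fun y : 𝒬 × (Fin K → 𝒳) => (y.2, y.1))
      (fun y1 y2 h => by simp only [Prod.mk.injEq] at h; simp [Prod.ext_iff]; tauto)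
  have sa1 : entOf P (fun s => (s.2.1 n, s.2.2))
      ≤ entOf P (fun s => s.2.1 n) + entOf P (fun s => s.2.2) :=
    subadd hP0 hP1 _ _
  -- (iv) H(Q_n,X) + H(X_U) ≤ H(Q_n,X_U) + H(X)
  have s4 : entOf P (fun s => (s.2.1 n, s.2.2, fun i : U => s.2.2 i.1))
        + entOf P (fun s => (fun i : U => s.2.2 i.1))
      ≤ entOf P (fun s => (s.2.1 n, fun i : U => s.2.2 i.1))
        + entOf P (fun s => (s.2.2, fun i : U => s.2.2 i.1)) :=
    submod hP0 _ _ _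
  have r8 : entOf P (fun s => (s.2.1 n, s.2.2, fun i : U => s.2.2 i.1))
      = entOf P (fun s => (s.2.1 n, s.2.2)) :=
    entOf_relabel P (fun s => (s.2.1 n, s.2.2)) (e := fun y : 𝒬 × (Fin K → 𝒳) => (y.1, y.2, fun i : U => y.2 i.1))
      (fun y1 y2 h => by simp only [Prod.mk.injEq] at h; simp [Prod.ext_iff]; tauto)
  have r9 : entOf P (fun s => (s.2.2, fun i : U => s.2.2 i.1)) = entOf P (fun s => s.2.2) :=
    entOf_relabel P (fun s => s.2.2) (e := fun y : Fin K → 𝒳 => (y, fun i : U => y i.1))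
      (fun y1 y2 h => by simp only [Prod.mk.injEq] at h; tauto)
  -- (v) subadditivity for H(Q, X_U)
  have sa2 : entOf P (fun s => (s.2.1, fun i : U => s.2.2 i.1))
      ≤ entOf P (fun s => s.2.1) + entOf P (fun s => (fun i : U => s.2.2 i.1)) :=
    subadd hP0 hP1 _ _
  -- (vi) the key submodularity instance
  have s5 : entOf P (fun s => (s.2.2, s.2.1, s.1, s.2.1 n, fun i : U => s.2.2 i.1))
        + entOf P (fun s => (s.1, s.2.1 n, fun i : U => s.2.2 i.1))
      ≤ entOf P (fun s => (s.2.2, s.1, s.2.1 n, fun i : U => s.2.2 i.1))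
        + entOf P (fun s => (s.2.1, s.1, s.2.1 n, fun i : U => s.2.2 i.1)) :=
    submod hP0 _ _ _
  have r10 : entOf P (fun s => (s.2.2, s.2.1, s.1, s.2.1 n, fun i : U => s.2.2 i.1))
      = entOf P (fun s => (s.1, s.2.1, s.2.2)) :=
    entOf_relabel P (fun s => (s.1, s.2.1, s.2.2))
      (e := fun y : 𝒜 × (Fin N → 𝒬) × (Fin K → 𝒳) =>
        (y.2.2, y.2.1, y.1, y.2.1 n, fun i : U => y.2.2 i.1))
      (fun y1 y2 h => by simp only [Prod.mk.injEq] at h; simp [Prod.ext_iff]; tauto)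
  have r11 : entOf P (fun s => (s.2.2, s.1, s.2.1 n, fun i : U => s.2.2 i.1))
      = entOf P (fun s => (s.1, s.2.1 n, s.2.2)) :=
    entOf_relabel P (fun s => (s.1, s.2.1 n, s.2.2))
      (e := fun y : 𝒜 × 𝒬 × (Fin K → 𝒳) => (y.2.2, y.1, y.2.1, fun i : U => y.2.2 i.1))
      (fun y1 y2 h => by simp only [Prod.mk.injEq] at h; simp [Prod.ext_iff]; tauto)
  have r12 : entOf P (fun s => (s.2.1, s.1, s.2.1 n, fun i : U => s.2.2 i.1))
      = entOf P (fun s => (s.1, s.2.1, fun i : U => s.2.2 i.1)) :=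
    entOf_relabel P (fun s => (s.1, s.2.1, fun i : U => s.2.2 i.1))
      (e := fun y : 𝒜 × (Fin N → 𝒬) × (U → 𝒳) => (y.2.1, y.1, y.2.1 n, y.2.2))
      (fun y1 y2 h => by simp only [Prod.mk.injEq] at h; simp [Prod.ext_iff]; tauto)
  linarith [s1, s2, s3, s4, s5, r1, r2, r3, r4, r5, r6, r7, r8, r9, r10, r11, r12,
    m1, sa1, sa2, hdet, hqi]
end

section
/- Let (Ω, μ) be a probability space carrying finitely-valued random variables: W taking values in a finite set 𝒲 with μ(W = w) > 0 for every w ∈ 𝒲; messages X = (X_1, …, X_K); queries Q_1, …, Q_N; and answers A_1, …, A_N. Assume: (privacy) for each n ∈ {1, …, N}, the triple (A_n, Q_n, X) is independent of W; (determinism) for each n and each w ∈ 𝒲, H(A_n | (Q_n, X) ; μ[|W = w]) = 0; and (query independence) for each w ∈ 𝒲, I((Q_1, …, Q_N) ; X ; μ[|W = w]) = 0. Then for every w₁ ∈ 𝒲, one has ∑_{n=1}^N H(A_n | Q_n) ≥ H((A_1, …, A_N) | (Q_1, …, Q_N) ; μ[|W = w₁]). -/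
open MeasureTheory ProbabilityTheory

/-- Independence of two finitely-valued random variables. -/
def rvIndep {Ω : Type*} [MeasurableSpace Ω] {S T : Type*}
    (μ : Measure Ω) (Y : Ω → S) (Z : Ω → T) : Prop :=
  ∀ (s : S) (t : T), μ (Y ⁻¹' {s} ∩ Z ⁻¹' {t}) = μ (Y ⁻¹' {s}) * μ (Z ⁻¹' {t})

open Real Finset

section Aux

variable {Ω : Type*} [MeasurableSpace Ω] {ν : Measure Ω}

lemma gibbs_sub {S T V : Type*} [Fintype S] [Fintype T] [Fintype V]
    (p : S → T → V → ℝ) (hp : ∀ s t v, 0 ≤ p s t v)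
    (hsum : ∑ t : T, ∑ s : S, ∑ v : V, p s t v = 1) :
    ∑ s, ∑ t, ∑ v, negMulLog (p s t v) + ∑ t, negMulLog (∑ s, ∑ v, p s t v)
      ≤ ∑ s, ∑ t, negMulLog (∑ v, p s t v) + ∑ t, ∑ v, negMulLog (∑ s, p s t v) := by
  set a : S → T → ℝ := fun s t => ∑ v, p s t v with ha_def
  set b : T → V → ℝ := fun t v => ∑ s, p s t v with hb_def
  set c : T → ℝ := fun t => ∑ s, ∑ v, p s t v with hc_def
  have ha0 : ∀ s t, 0 ≤ a s t := fun s t => Finset.sum_nonneg fun v _ => hp s t v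
  have hb0 : ∀ t v, 0 ≤ b t v := fun t v => Finset.sum_nonneg fun s _ => hp s t v
  have hc0 : ∀ t, 0 ≤ c t := fun t => Finset.sum_nonneg fun s _ => ha0 s t
  have hac : ∀ s t, a s t ≤ c t := fun s t =>
    Finset.single_le_sum (fun s _ => ha0 s t) (Finset.mem_univ s)
  have hcb : ∀ t, c t = ∑ v, b t v := fun t => Finset.sum_comm
  -- pointwise inequality
  have key : ∀ s t v,
      p s t v * (log (a s t) + log (b t v) - log (c t) - log (p s t v))
        ≤ a s t * b t v / c t - p s t v := by
    intro s t v
    rcases (hp s t v).eq_or_lt with h0 | hpos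
    · rw [← h0]
      simp only [zero_mul, sub_zero]
      exact div_nonneg (mul_nonneg (ha0 s t) (hb0 t v)) (hc0 t)
    · have hpa : p s t v ≤ a s t := Finset.single_le_sum (fun v _ => hp s t v) (Finset.mem_univ v)
      have hpb : p s t v ≤ b t v := Finset.single_le_sum (fun s _ => hp s t v) (Finset.mem_univ s)
      have ha : 0 < a s t := lt_of_lt_of_le hpos hpa
      have hb : 0 < b t v := lt_of_lt_of_le hpos hpb
      have hc : 0 < c t := lt_of_lt_of_le ha (hac s t)
      have hx : 0 < a s t * b t v / (c t * p s t v) := by positivity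
      have hlog : log (a s t) + log (b t v) - log (c t) - log (p s t v)
          = log (a s t * b t v / (c t * p s t v)) := by
        rw [Real.log_div (by positivity) (by positivity), Real.log_mul ha.ne' hb.ne',
          Real.log_mul hc.ne' hpos.ne']
        ring
      rw [hlog]
      calc p s t v * log (a s t * b t v / (c t * p s t v))
          ≤ p s t v * (a s t * b t v / (c t * p s t v) - 1) :=
            mul_le_mul_of_nonneg_left (Real.log_le_sub_one_of_pos hx) hpos.le
        _ = a s t * b t v / c t - p s t v := by field_simp
  -- sum the pointwise inequality
  have hsum_le : ∑ s, ∑ t, ∑ v,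
      p s t v * (log (a s t) + log (b t v) - log (c t) - log (p s t v))
      ≤ ∑ s, ∑ t, ∑ v, (a s t * b t v / c t - p s t v) :=
    Finset.sum_le_sum fun s _ => Finset.sum_le_sum fun t _ => Finset.sum_le_sum fun v _ =>
      key s t v
  -- RHS of sum ≤ 0
  have hRHS : ∑ s, ∑ t, ∑ v, (a s t * b t v / c t - p s t v) ≤ 0 := by
    have h1 : ∑ s, ∑ t, ∑ v, (a s t * b t v / c t - p s t v)
        = (∑ t, ∑ s, ∑ v, a s t * b t v / c t) - 1 := by
      rw [Finset.sum_comm (f := fun s t => ∑ v, (a s t * b t v / c t - p s t v))]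
      rw [← hsum]
      rw [← Finset.sum_sub_distrib]
      congr 1; ext t
      rw [← Finset.sum_sub_distrib]
      congr 1; ext s
      rw [← Finset.sum_sub_distrib]
    rw [h1]
    have h2 : ∀ t, ∑ s, ∑ v, a s t * b t v / c t ≤ c t := by
      intro t
      have e : ∑ s, ∑ v, a s t * b t v / c t = (∑ s, a s t) * (∑ v, b t v) / c t := by
        rw [Finset.sum_mul, Finset.sum_div]
        congr 1; ext s
        rw [Finset.mul_sum, Finset.sum_div]
      have e2 : (∑ s, a s t) = c t := rfl
      have e3 : (∑ v, b t v) = c t := (hcb t).symm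
      rw [e, e2, e3]
      rcases (hc0 t).eq_or_lt with h0 | hpos
      · rw [← h0]; simp
      · rw [mul_div_assoc, div_self hpos.ne']; simp
    calc (∑ t, ∑ s, ∑ v, a s t * b t v / c t) - 1 ≤ (∑ t, c t) - 1 :=
          sub_le_sub_right (Finset.sum_le_sum fun t _ => h2 t) 1
      _ = 0 := by rw [hsum]; ring
  -- LHS of sum equals entropy combination
  have hLHS : ∑ s, ∑ t, ∑ v,
      p s t v * (log (a s t) + log (b t v) - log (c t) - log (p s t v))
      = (∑ s, ∑ t, a s t * log (a s t)) + (∑ t, ∑ v, b t v * log (b t v))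
        - (∑ t, c t * log (c t)) - ∑ s, ∑ t, ∑ v, p s t v * log (p s t v) := by
    have e1 : ∑ s, ∑ t, ∑ v, p s t v * log (a s t) = ∑ s, ∑ t, a s t * log (a s t) := by
      congr 1; ext s; congr 1; ext t; rw [← Finset.sum_mul]
    have e2 : ∑ s, ∑ t, ∑ v, p s t v * log (b t v) = ∑ t, ∑ v, b t v * log (b t v) := by
      rw [Finset.sum_comm (f := fun s t => ∑ v, p s t v * log (b t v))]
      congr 1; ext t
      rw [Finset.sum_comm (f := fun s v => p s t v * log (b t v))]
      congr 1; ext v; rw [← Finset.sum_mul]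
    have e3 : ∑ s, ∑ t, ∑ v, p s t v * log (c t) = ∑ t, c t * log (c t) := by
      rw [Finset.sum_comm (f := fun s t => ∑ v, p s t v * log (c t))]
      congr 1; ext t
      calc ∑ s, ∑ v, p s t v * log (c t) = ∑ s, (∑ v, p s t v) * log (c t) := by
            congr 1; ext s; rw [← Finset.sum_mul]
        _ = (∑ s, ∑ v, p s t v) * log (c t) := by rw [← Finset.sum_mul]
        _ = c t * log (c t) := rfl
    calc ∑ s, ∑ t, ∑ v, p s t v * (log (a s t) + log (b t v) - log (c t) - log (p s t v))
        = ∑ s, ∑ t, ∑ v, (p s t v * log (a s t) + p s t v * log (b t v)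
            - p s t v * log (c t) - p s t v * log (p s t v)) := by
          congr 1; ext s; congr 1; ext t; congr 1; ext v; ring
      _ = _ := by
          simp only [Finset.sum_sub_distrib, Finset.sum_add_distrib, e1, e2, e3]
  simp only [negMulLog, neg_mul, Finset.sum_neg_distrib]
  rw [hLHS] at hsum_le
  have := le_trans hsum_le hRHS
  linarith

lemma dmeas_of_singleton {S : Type*} [Countable S] {Y : Ω → S}
    (h : ∀ s : S, MeasurableSet (Y ⁻¹' {s})) : DMeasurable Y := by
  intro u
  have : Y ⁻¹' u = ⋃ s ∈ u, Y ⁻¹' {s} := by ext ω; simp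
  rw [this]
  exact MeasurableSet.biUnion (Set.to_countable u) (fun s _ => h s)

lemma dmeas_pair {S T : Type*} [Fintype S] [Fintype T] {Y : Ω → S} {Z : Ω → T}
    (hY : DMeasurable Y) (hZ : DMeasurable Z) : DMeasurable (fun ω => (Y ω, Z ω)) := by
  apply dmeas_of_singleton
  rintro ⟨s, t⟩
  have : (fun ω => (Y ω, Z ω)) ⁻¹' {(s, t)} = Y ⁻¹' {s} ∩ Z ⁻¹' {t} := by
    ext ω; simp [Prod.ext_iff]
  rw [this]
  exact (hY _).inter (hZ _)

lemma dmeas_pi {ι S : Type*} [Finite ι] [Finite S] {F : ι → Ω → S}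
    (hF : ∀ i, DMeasurable (F i)) : DMeasurable (fun ω (i : ι) => F i ω) := by
  apply dmeas_of_singleton
  intro f
  have : (fun ω (i : ι) => F i ω) ⁻¹' {f} = ⋂ i, F i ⁻¹' {f i} := by
    ext ω; simp [funext_iff]
  rw [this]
  exact MeasurableSet.iInter (fun i => hF i _)

lemma meas_eq_sum_of_iUnion {ι : Type*} [Fintype ι] {E : Set Ω} {f : ι → Set Ω}
    (hmeas : ∀ i, MeasurableSet (f i)) (hdisj : Pairwise (Function.onFun Disjoint f))
    (hE : E = ⋃ i, f i) : ν E = ∑ i, ν (f i) := by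
  rw [hE, measure_iUnion hdisj hmeas, tsum_fintype]

/-- Relabeling invariance of entropy. -/
lemma rvH_comp {S S' : Type*} [Fintype S] [Fintype S'] {g : S → S'}
    (hg : Function.Injective g) (Y : Ω → S) :
    rvH ν (fun ω => g (Y ω)) = rvH ν Y := by
  classical
  unfold rvH
  have hout : ∀ s' ∈ Finset.univ \ Finset.univ.image g,
      negMulLog ((ν ((fun ω => g (Y ω)) ⁻¹' {s'})).toReal) = 0 := by
    intro s' hs'
    simp only [Finset.mem_sdiff, Finset.mem_image, Finset.mem_univ, true_and,
      not_exists] at hs'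
    have : (fun ω => g (Y ω)) ⁻¹' {s'} = ∅ := by
      ext ω; simp only [Set.mem_preimage, Set.mem_singleton_iff, Set.mem_empty_iff_false,
        iff_false]
      exact fun h => hs' (Y ω) h
    rw [this]
    simp [Real.negMulLog]
  rw [← Finset.sum_subset (Finset.subset_univ (Finset.univ.image g))
    (fun s' _ hs' => hout s' (Finset.mem_sdiff.2 ⟨Finset.mem_univ _, hs'⟩)),
    Finset.sum_image (fun a _ b _ h => hg h)]
  congr 1
  ext s
  have : (fun ω => g (Y ω)) ⁻¹' {g s} = Y ⁻¹' {s} := by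
    ext ω; simp [hg.eq_iff]
  rw [this]

/-- Submodularity: `H(Y,Z,U) + H(Z) ≤ H(Y,Z) + H(Z,U)`. -/
lemma rvH_submod {S T V : Type*} [Fintype S] [Fintype T] [Fintype V]
    [IsProbabilityMeasure ν] {Y : Ω → S} {Z : Ω → T} {U : Ω → V}
    (hY : DMeasurable Y) (hZ : DMeasurable Z) (hU : DMeasurable U) :
    rvH ν (fun ω => (Y ω, Z ω, U ω)) + rvH ν Z
      ≤ rvH ν (fun ω => (Y ω, Z ω)) + rvH ν (fun ω => (Z ω, U ω)) := by
  have htm : DMeasurable (fun ω => (Y ω, Z ω, U ω)) :=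
    dmeas_pair hY (dmeas_pair hZ hU)
  set p : S → T → V → ℝ :=
    fun s t v => (ν ((fun ω => (Y ω, Z ω, U ω)) ⁻¹' {(s, t, v)})).toReal with hp_def
  have hp : ∀ s t v, 0 ≤ p s t v := fun _ _ _ => ENNReal.toReal_nonneg
  have hfin : ∀ (E : Set Ω), ν E ≠ ⊤ := fun E => measure_ne_top ν E
  -- marginal over V
  have ma : ∀ s t, (ν ((fun ω => (Y ω, Z ω)) ⁻¹' {(s, t)})).toReal = ∑ v, p s t v := by
    intro s t
    have := meas_eq_sum_of_iUnion (ν := ν)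
      (f := fun v : V => (fun ω => (Y ω, Z ω, U ω)) ⁻¹' {(s, t, v)})
      (fun v => htm _)
      (by
        intro v v' hvv'
        rw [Function.onFun, Set.disjoint_left]
        intro ω h1 h2
        simp only [Set.mem_preimage, Set.mem_singleton_iff, Prod.mk.injEq] at h1 h2
        exact hvv' (h1.2.2.symm.trans h2.2.2))
      (E := (fun ω => (Y ω, Z ω)) ⁻¹' {(s, t)})
      (by ext ω; simp [Prod.ext_iff])
    rw [this, ENNReal.toReal_sum (fun v _ => hfin _)]
  -- marginal over S
  have mb : ∀ t v, (ν ((fun ω => (Z ω, U ω)) ⁻¹' {(t, v)})).toReal = ∑ s, p s t v := by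
    intro t v
    have := meas_eq_sum_of_iUnion (ν := ν)
      (f := fun s : S => (fun ω => (Y ω, Z ω, U ω)) ⁻¹' {(s, t, v)})
      (fun s => htm _)
      (by
        intro s s' hss'
        rw [Function.onFun, Set.disjoint_left]
        intro ω h1 h2
        simp only [Set.mem_preimage, Set.mem_singleton_iff, Prod.mk.injEq] at h1 h2
        exact hss' (h1.1.symm.trans h2.1))
      (E := (fun ω => (Z ω, U ω)) ⁻¹' {(t, v)})
      (by ext ω; simp [Prod.ext_iff])
    rw [this, ENNReal.toReal_sum (fun s _ => hfin _)]
  -- marginal over S × V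
  have mc : ∀ t, (ν (Z ⁻¹' {t})).toReal = ∑ s, ∑ v, p s t v := by
    intro t
    have := meas_eq_sum_of_iUnion (ν := ν)
      (f := fun sv : S × V => (fun ω => (Y ω, Z ω, U ω)) ⁻¹' {(sv.1, t, sv.2)})
      (fun sv => htm _)
      (by
        intro sv sv' hsv
        rw [Function.onFun, Set.disjoint_left]
        intro ω h1 h2
        simp only [Set.mem_preimage, Set.mem_singleton_iff, Prod.mk.injEq] at h1 h2
        exact hsv (Prod.ext (h1.1.symm.trans h2.1) (h1.2.2.symm.trans h2.2.2)))
      (E := Z ⁻¹' {t})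
      (by ext ω; simp [Prod.ext_iff])
    rw [this, ENNReal.toReal_sum (fun sv _ => hfin _), Fintype.sum_prod_type]
  -- total mass 1
  have hsum : ∑ t : T, ∑ s : S, ∑ v : V, p s t v = 1 := by
    have h1 : ∑ t : T, ν (Z ⁻¹' {t}) = 1 := by
      rw [MeasureTheory.sum_measure_preimage_singleton Finset.univ (fun t _ => hZ {t})]
      simp
    have h2 : ∑ t : T, (ν (Z ⁻¹' {t})).toReal = 1 := by
      rw [← ENNReal.toReal_sum (fun t _ => hfin _), h1]; simp
    rw [← h2]
    exact Finset.sum_congr rfl fun t _ => (mc t).symm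
  have hmain := gibbs_sub p hp hsum
  -- rewrite all four entropies
  have e1 : rvH ν (fun ω => (Y ω, Z ω, U ω)) = ∑ s, ∑ t, ∑ v, negMulLog (p s t v) := by
    unfold rvH
    rw [Fintype.sum_prod_type]
    exact Finset.sum_congr rfl fun s _ => by rw [Fintype.sum_prod_type]
  have e2 : rvH ν (fun ω => (Y ω, Z ω)) = ∑ s, ∑ t, negMulLog (∑ v, p s t v) := by
    unfold rvH
    rw [Fintype.sum_prod_type]
    exact Finset.sum_congr rfl fun s _ => Finset.sum_congr rfl fun t _ => by rw [ma]
  have e3 : rvH ν (fun ω => (Z ω, U ω)) = ∑ t, ∑ v, negMulLog (∑ s, p s t v) := by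
    unfold rvH
    rw [Fintype.sum_prod_type]
    exact Finset.sum_congr rfl fun t _ => Finset.sum_congr rfl fun v _ => by rw [mb]
  have e4 : rvH ν Z = ∑ t, negMulLog (∑ s, ∑ v, p s t v) := by
    unfold rvH
    exact Finset.sum_congr rfl fun t _ => by rw [mc]
  rw [e1, e2, e3, e4]
  exact hmain

/-- Conditioning on more reduces entropy. -/
lemma rvCondH_pair_le {S T V : Type*} [Fintype S] [Fintype T] [Fintype V]
    [IsProbabilityMeasure ν] {Y : Ω → S} {Z : Ω → T} {U : Ω → V}
    (hY : DMeasurable Y) (hZ : DMeasurable Z) (hU : DMeasurable U) :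
    rvCondH ν Y (fun ω => (Z ω, U ω)) ≤ rvCondH ν Y Z := by
  have := rvH_submod (ν := ν) hY hZ hU
  unfold rvCondH
  linarith

lemma rvCondH_swap_right {S T V : Type*} [Fintype S] [Fintype T] [Fintype V]
    {Y : Ω → S} {Z : Ω → T} {U : Ω → V} :
    rvCondH ν Y (fun ω => (Z ω, U ω)) = rvCondH ν Y (fun ω => (U ω, Z ω)) := by
  unfold rvCondH
  have hg : Function.Injective (fun x : S × V × T => (x.1, x.2.2, x.2.1)) := by
    intro x y h
    simp only [Prod.mk.injEq] at h
    exact Prod.ext h.1 (Prod.ext h.2.2 h.2.1)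
  have hg2 : Function.Injective (fun x : V × T => (x.2, x.1)) := by
    intro x y h
    simp only [Prod.mk.injEq] at h
    exact Prod.ext h.2 h.1
  have h1 : rvH ν (fun ω => (Y ω, Z ω, U ω))
      = rvH ν (fun ω => (Y ω, U ω, Z ω)) := by
    have e : (fun ω => (Y ω, Z ω, U ω))
        = fun ω => ((fun x : S × V × T => (x.1, x.2.2, x.2.1)) (Y ω, U ω, Z ω)) := rfl
    rw [e, rvH_comp hg]
  have h2 : rvH ν (fun ω => (Z ω, U ω)) = rvH ν (fun ω => (U ω, Z ω)) := by
    have e : (fun ω => (Z ω, U ω))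
        = fun ω => ((fun x : V × T => (x.2, x.1)) (U ω, Z ω)) := rfl
    rw [e, rvH_comp hg2]
  rw [h1, h2]

lemma rvCondH_comp_right {S T T' : Type*} [Fintype S] [Fintype T] [Fintype T']
    {Y : Ω → S} {Z : Ω → T} {g : T → T'} (hg : Function.Injective g) :
    rvCondH ν Y (fun ω => g (Z ω)) = rvCondH ν Y Z := by
  unfold rvCondH
  have h1 : rvH ν (fun ω => (Y ω, g (Z ω))) = rvH ν (fun ω => (Y ω, Z ω)) :=
    rvH_comp (g := fun x : S × T => (x.1, g x.2))
      (fun x y h => by simp only [Prod.mk.injEq] at h; exact Prod.ext h.1 (hg h.2))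
      (fun ω => (Y ω, Z ω))
  rw [h1, rvH_comp hg]

/-- Chain rule for conditional entropy. -/
lemma rvCondH_chain {S T V : Type*} [Fintype S] [Fintype T] [Fintype V]
    {Y : Ω → S} {Z : Ω → T} {Q : Ω → V} :
    rvCondH ν (fun ω => (Y ω, Z ω)) Q
      = rvCondH ν Y (fun ω => (Z ω, Q ω)) + rvCondH ν Z Q := by
  unfold rvCondH
  have hg : Function.Injective (fun x : S × T × V => ((x.1, x.2.1), x.2.2)) := by
    intro x y h
    simp only [Prod.mk.injEq] at h
    exact Prod.ext h.1.1 (Prod.ext h.1.2 h.2)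
  have h1 : rvH ν (fun ω => ((Y ω, Z ω), Q ω)) = rvH ν (fun ω => (Y ω, Z ω, Q ω)) := by
    have e : (fun ω => ((Y ω, Z ω), Q ω))
        = fun ω => ((fun x : S × T × V => ((x.1, x.2.1), x.2.2)) (Y ω, Z ω, Q ω)) := rfl
    rw [e, rvH_comp hg]
  rw [h1]
  ring

end Aux

section Main

variable {Ω : Type*} [MeasurableSpace Ω] {ν : Measure Ω}

/-- Subadditivity of conditional entropy. -/
lemma rvCondH_subadd {𝒜 𝒬' : Type*} [Fintype 𝒜] [Fintype 𝒬'] [IsProbabilityMeasure ν] :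
    ∀ (N : ℕ) (A : Fin N → Ω → 𝒜) (Q : Ω → 𝒬'),
      (∀ n, DMeasurable (A n)) → DMeasurable Q →
      rvCondH ν (fun ω (n : Fin N) => A n ω) Q ≤ ∑ n, rvCondH ν (A n) Q := by
  intro N
  induction N with
  | zero =>
    intro A Q hA hQ
    have hg : Function.Injective
        (fun q : 𝒬' => (((fun n : Fin 0 => n.elim0) : Fin 0 → 𝒜), q)) :=
      fun a b h => congrArg Prod.snd h
    have e : (fun ω => ((fun n : Fin 0 => A n ω), Q ω))
        = fun ω => ((fun q : 𝒬' => (((fun n : Fin 0 => n.elim0) : Fin 0 → 𝒜), q)) (Q ω)) := by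
      funext ω
      simp only
      congr 1
      exact Subsingleton.elim _ _
    unfold rvCondH
    rw [e, rvH_comp hg]
    simp
  | succ N ih =>
    intro A Q hA hQ
    have hPm : DMeasurable (fun ω (i : Fin N) => A i.castSucc ω) :=
      dmeas_pi (fun i => hA i.castSucc)
    have hg : Function.Injective
        (fun f : Fin (N+1) → 𝒜 => ((fun i : Fin N => f i.castSucc), f (Fin.last N))) := by
      intro f f' h
      simp only [Prod.mk.injEq] at h
      funext n
      induction n using Fin.lastCases with
      | last => exact h.2
      | cast i => exact congrFun h.1 i
    have hg2 : Function.Injective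
        (fun x : (Fin (N+1) → 𝒜) × 𝒬' =>
          (((fun i : Fin N => x.1 i.castSucc), x.1 (Fin.last N)), x.2)) := by
      intro x y h
      simp only [Prod.mk.injEq] at h
      exact Prod.ext (hg (Prod.ext h.1.1 h.1.2)) h.2
    have h1 : rvH ν (fun ω => (((fun i : Fin N => A i.castSucc ω), A (Fin.last N) ω), Q ω))
        = rvH ν (fun ω => ((fun n : Fin (N+1) => A n ω), Q ω)) := by
      have e : (fun ω => (((fun i : Fin N => A i.castSucc ω), A (Fin.last N) ω), Q ω))
          = fun ω => ((fun x : (Fin (N+1) → 𝒜) × 𝒬' =>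
              (((fun i : Fin N => x.1 i.castSucc), x.1 (Fin.last N)), x.2))
              ((fun n => A n ω), Q ω)) := rfl
      rw [e, rvH_comp hg2]
    have hcond_eq : rvCondH ν (fun ω (n : Fin (N+1)) => A n ω) Q
        = rvCondH ν (fun ω => ((fun i : Fin N => A i.castSucc ω), A (Fin.last N) ω)) Q := by
      unfold rvCondH
      rw [h1]
    have hchain := rvCondH_chain (ν := ν) (Y := fun ω (i : Fin N) => A i.castSucc ω)
      (Z := A (Fin.last N)) (Q := Q)
    have hswap := rvCondH_swap_right (ν := ν) (Y := fun ω (i : Fin N) => A i.castSucc ω)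
      (Z := A (Fin.last N)) (U := Q)
    have hred : rvCondH ν (fun ω (i : Fin N) => A i.castSucc ω)
        (fun ω => (Q ω, A (Fin.last N) ω)) ≤ rvCondH ν (fun ω (i : Fin N) => A i.castSucc ω) Q :=
      rvCondH_pair_le hPm hQ (hA (Fin.last N))
    have hih := ih (fun i => A i.castSucc) Q (fun i => hA i.castSucc) hQ
    have hsum : ∑ n : Fin (N+1), rvCondH ν (A n) Q
        = ∑ i : Fin N, rvCondH ν (A i.castSucc) Q + rvCondH ν (A (Fin.last N)) Q :=
      Fin.sum_univ_castSucc _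
    rw [hcond_eq, hchain, hsum]
    linarith [hswap ▸ hred]

lemma rvIndep.comp_left {S S' 𝒲 : Type*} [Fintype S] {Y : Ω → S} {W : Ω → 𝒲} {μ : Measure Ω}
    (hY : DMeasurable Y) (hW : DMeasurable W) (h : rvIndep μ Y W) (f : S → S') :
    rvIndep μ (fun ω => f (Y ω)) W := by
  classical
  intro s' w
  have hset : (fun ω => f (Y ω)) ⁻¹' {s'}
      = ⋃ a ∈ (Finset.univ.filter (fun a => f a = s') : Finset S), Y ⁻¹' {a} := by
    ext ω; simp
  have hdisj : ((Finset.univ.filter (fun a : S => f a = s') : Finset S) : Set S).PairwiseDisjoint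
      (fun a => Y ⁻¹' {a}) := by
    intro a _ b _ hab
    rw [Function.onFun, Set.disjoint_left]
    intro ω h1 h2
    exact hab ((Set.mem_singleton_iff.1 h1).symm.trans (Set.mem_singleton_iff.1 h2))
  have hdisj2 : ((Finset.univ.filter (fun a : S => f a = s') : Finset S) : Set S).PairwiseDisjoint
      (fun a => Y ⁻¹' {a} ∩ W ⁻¹' {w}) := by
    intro a ha b hb hab
    exact (hdisj ha hb hab).mono Set.inter_subset_left Set.inter_subset_left
  rw [hset, Set.iUnion₂_inter,
    measure_biUnion_finset hdisj2 (fun a _ => (hY _).inter (hW _)),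
    measure_biUnion_finset hdisj (fun a _ => hY _), Finset.sum_mul]
  exact Finset.sum_congr rfl fun a _ => h a w

lemma cond_meas_of_indep {S 𝒲 : Type*} {Y : Ω → S} {W : Ω → 𝒲} {μ : Measure Ω}
    [IsFiniteMeasure μ] (hW : DMeasurable W) (h : rvIndep μ Y W) {w : 𝒲}
    (hw : μ (W ⁻¹' {w}) ≠ 0) (s : S) :
    (μ[|W ⁻¹' {w}]) (Y ⁻¹' {s}) = μ (Y ⁻¹' {s}) := by
  rw [cond_apply (hW {w}), Set.inter_comm, h s w, mul_comm (μ (Y ⁻¹' {s})), ← mul_assoc,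
    ENNReal.inv_mul_cancel hw (measure_ne_top μ _), one_mul]

lemma rvH_cond_of_indep {S 𝒲 : Type*} [Fintype S] {Y : Ω → S} {W : Ω → 𝒲} {μ : Measure Ω}
    [IsFiniteMeasure μ] (hW : DMeasurable W) (h : rvIndep μ Y W) {w : 𝒲}
    (hw : μ (W ⁻¹' {w}) ≠ 0) :
    rvH (μ[|W ⁻¹' {w}]) Y = rvH μ Y := by
  unfold rvH
  exact Finset.sum_congr rfl fun s _ => by rw [cond_meas_of_indep hW h hw s]

end Main

/-- inequalities (27)–(31) of the converse proof: under privacy, determinism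
of answers and independence of queries from messages, the total (unconditional) conditional
answer entropy `∑ₙ H(Aₙ | Qₙ)` is at least the joint conditional answer entropy
`H((A_1, …, A_N) | (Q_1, …, Q_N))` computed under conditioning on any demand `W = w₁`. -/
theorem stmt3 {Ω : Type*} [MeasurableSpace Ω] (μ : Measure Ω) [IsProbabilityMeasure μ]
    {𝒜 𝒬 𝒳 𝒲 : Type*} [Fintype 𝒜] [Fintype 𝒬] [Fintype 𝒳] [Fintype 𝒲]
    {N K : ℕ}
    (A : Fin N → Ω → 𝒜) (Q : Fin N → Ω → 𝒬) (X : Fin K → Ω → 𝒳) (W : Ω → 𝒲)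
    (hAm : ∀ n, DMeasurable (A n)) (hQm : ∀ n, DMeasurable (Q n))
    (hXm : ∀ i, DMeasurable (X i)) (hWm : DMeasurable W)
    (hWpos : ∀ w : 𝒲, 0 < μ (W ⁻¹' {w}))
    (hpriv : ∀ n, rvIndep μ (fun ω => (A n ω, Q n ω, fun i : Fin K => X i ω)) W)
    (hdet : ∀ n (w : 𝒲),
      rvCondH (μ[|W ⁻¹' {w}]) (A n) (fun ω => (Q n ω, fun i : Fin K => X i ω)) = 0)
    (hqi : ∀ w : 𝒲,
      rvMI (μ[|W ⁻¹' {w}]) (fun ω (m : Fin N) => Q m ω) (fun ω (i : Fin K) => X i ω) = 0)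
    (w₁ : 𝒲) :
    rvCondH (μ[|W ⁻¹' {w₁}]) (fun ω (n : Fin N) => A n ω) (fun ω (n : Fin N) => Q n ω) ≤
      ∑ n : Fin N, rvCondH μ (A n) (Q n) := by
  have hw : μ (W ⁻¹' {w₁}) ≠ 0 := (hWpos w₁).ne'
  haveI : IsProbabilityMeasure (μ[|W ⁻¹' {w₁}]) := cond_isProbabilityMeasure hw
  have hXv : DMeasurable (fun ω (i : Fin K) => X i ω) := dmeas_pi hXm
  have htrm : ∀ n, DMeasurable (fun ω => (A n ω, Q n ω, fun i : Fin K => X i ω)) :=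
    fun n => dmeas_pair (hAm n) (dmeas_pair (hQm n) hXv)
  have hQv : DMeasurable (fun ω (n : Fin N) => Q n ω) := dmeas_pi hQm
  have stepC : ∀ n, rvCondH (μ[|W ⁻¹' {w₁}]) (A n) (Q n) = rvCondH μ (A n) (Q n) := by
    intro n
    have hpair : rvIndep μ (fun ω => (A n ω, Q n ω)) W := by
      have := rvIndep.comp_left (htrm n) hWm (hpriv n) (fun x => (x.1, x.2.1))
      exact this
    have hQn : rvIndep μ (Q n) W := by
      have := rvIndep.comp_left (htrm n) hWm (hpriv n) (fun x => x.2.1)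
      exact this
    unfold rvCondH
    rw [rvH_cond_of_indep hWm hpair hw, rvH_cond_of_indep hWm hQn hw]
  have stepB : ∀ n, rvCondH (μ[|W ⁻¹' {w₁}]) (A n) (fun ω (m : Fin N) => Q m ω)
      ≤ rvCondH (μ[|W ⁻¹' {w₁}]) (A n) (Q n) := by
    intro n
    have hg2 : Function.Injective (fun q : Fin N → 𝒬 => (q n, q)) := by
      intro x y h; simp only [Prod.mk.injEq] at h; exact h.2
    have heq : rvCondH (μ[|W ⁻¹' {w₁}]) (A n) (fun ω => (Q n ω, fun m : Fin N => Q m ω))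
        = rvCondH (μ[|W ⁻¹' {w₁}]) (A n) (fun ω (m : Fin N) => Q m ω) :=
      rvCondH_comp_right (g := fun q : Fin N → 𝒬 => (q n, q)) (Z := fun ω (m : Fin N) => Q m ω) hg2
    rw [← heq]
    exact rvCondH_pair_le (hAm n) (hQm n) hQv
  have stepA : rvCondH (μ[|W ⁻¹' {w₁}]) (fun ω (n : Fin N) => A n ω)
      (fun ω (n : Fin N) => Q n ω)
      ≤ ∑ n, rvCondH (μ[|W ⁻¹' {w₁}]) (A n) (fun ω (m : Fin N) => Q m ω) :=
    rvCondH_subadd N A (fun ω (m : Fin N) => Q m ω) hAm hQv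
  calc rvCondH (μ[|W ⁻¹' {w₁}]) (fun ω (n : Fin N) => A n ω) (fun ω (n : Fin N) => Q n ω)
      ≤ ∑ n, rvCondH (μ[|W ⁻¹' {w₁}]) (A n) (fun ω (m : Fin N) => Q m ω) := stepA
    _ ≤ ∑ n, rvCondH (μ[|W ⁻¹' {w₁}]) (A n) (Q n) := Finset.sum_le_sum fun n _ => stepB n
    _ = ∑ n, rvCondH μ (A n) (Q n) := Finset.sum_congr rfl fun n _ => stepC n
end

section
/- Let (Ω, μ) be a probability space carrying finitely-valued random variables: W taking values in a finite set 𝒲 with μ(W = w) > 0 for every w ∈ 𝒲; messages X = (X_1, …, X_K); queries Q_1, …, Q_N; and answers A_1, …, A_N, with N ≥ 1. Assume: (privacy) for each n ∈ {1, …, N}, the triple (A_n, Q_n, X) is independent of W; (determinism) for each n and each w ∈ 𝒲, H(A_n | (Q_n, X) ; μ[|W = w]) = 0; and (query independence) for each w ∈ 𝒲, I((Q_1, …, Q_N) ; X ; μ[|W = w]) = 0. Then for every subset U ⊆ {1, …, K} and all w, w' ∈ 𝒲, one has H((A_1, …, A_N) | ((Q_1, …, Q_N), (X_i)_{i∈U})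 ; μ[|W = w]) ≥ (1/N) · H((A_1, …, A_N) | ((Q_1, …, Q_N), (X_i)_{i∈U}) ; μ[|W = w']). -/
/-!
Write `P_w` for `μ` conditioned on `W = w`. Subadditivity of conditional entropy, and the fact
that conditioning on less can only increase it, give
`H(A | Q, X_U; P_w') ≤ ∑ₙ H(Aₙ | Qₙ, X_U; P_w')`. Each summand depends only on the law of
`(Aₙ, Qₙ, X)`, which by privacy is the same under every `P_w`. Under `P_w`, `Aₙ` is a function of
`(Qₙ, X)` and `Q` is independent of `X`, so `I(Aₙ; Q | Qₙ, X_U) = 0`; hence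
`H(Aₙ | Qₙ, X_U; P_w) = H(Aₙ | Q, X_U; P_w) ≤ H(A | Q, X_U; P_w)`, and summing over `n` gives the
factor `N`.

All these are entropies of functions of the finite-valued vector `(A, Q, X)`, so they are computed
from its law, a weight function on a finite type, on which the Shannon inequalities follow from
Gibbs' inequality.
-/

open MeasureTheory ProbabilityTheory

open Finset Real
open scoped Classical

namespace FiniteEntropy

variable {α β γ δ κ ξ η υ : Type*} [Fintype α]

noncomputable def pushforward (p : α → ℝ) (f : α → β) (b : β) : ℝ :=
  ∑ a with f a = b, p a

noncomputable def entropy [Fintype β] (p : α → ℝ) (f : α → β) : ℝ :=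
  ∑ b, negMulLog (pushforward p f b)

noncomputable def condEntropy [Fintype β] [Fintype γ] (p : α → ℝ) (f : α → β) (c : α → γ) : ℝ :=
  entropy p (fun a => (f a, c a)) - entropy p c

noncomputable def mutualInfo [Fintype β] [Fintype γ] (p : α → ℝ) (f : α → β) (g : α → γ) : ℝ :=
  entropy p f + entropy p g - entropy p (fun a => (f a, g a))

lemma pushforward_nonneg {p : α → ℝ} (hp : ∀ a, 0 ≤ p a) (f : α → β) (b : β) :
    0 ≤ pushforward p f b :=
  sum_nonneg fun a _ => hp a

lemma sum_pushforward [Fintype β] (p : α → ℝ) (f : α → β) :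
    ∑ b, pushforward p f b = ∑ a, p a :=
  sum_fiberwise _ f p

lemma pushforward_comp [Fintype β] (p : α → ℝ) (f : α → β) (g : β → γ) (c : γ) :
    pushforward p (fun a => g (f a)) c = ∑ b with g b = c, pushforward p f b := by
  simp only [pushforward]
  rw [sum_fiberwise_eq_sum_filter univ (univ.filter fun b => g b = c) f p]
  simp

lemma sum_pushforward_pair_right [Fintype γ] (p : α → ℝ) (f : α → β) (g : α → γ) (y : β) :
    ∑ z, pushforward p (fun a => (f a, g a)) (y, z) = pushforward p f y := by
  simp only [pushforward, Prod.mk.injEq, ← filter_filter]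
  exact sum_fiberwise _ g p

lemma sum_pushforward_pair_left [Fintype β] (p : α → ℝ) (f : α → β) (g : α → γ) (z : γ) :
    ∑ y, pushforward p (fun a => (f a, g a)) (y, z) = pushforward p g z := by
  simp only [pushforward, Prod.mk.injEq, and_comm (a := f _ = _), ← filter_filter]
  exact sum_fiberwise _ f p

lemma entropy_comp [Fintype β] [Fintype γ] (p : α → ℝ) (g : α → β) (f : β → γ) :
    entropy p (fun a => f (g a)) = entropy (pushforward p g) f := by
  simp only [entropy, pushforward_comp]
  rfl

lemma condEntropy_comp_eq_of_pushforward_eq [Fintype β] [Fintype γ] [Fintype δ] {p p' : α → ℝ}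
    {g : α → β} (h : pushforward p' g = pushforward p g) (f : β → γ) (k : β → δ) :
    condEntropy p' (fun a => f (g a)) (fun a => k (g a)) =
      condEntropy p (fun a => f (g a)) (fun a => k (g a)) := by
  simp only [condEntropy]
  rw [entropy_comp p' g k, entropy_comp p' g fun b => (f b, k b), h, ← entropy_comp p g k,
    ← entropy_comp p g fun b => (f b, k b)]

lemma negMulLog_sum_le {ι : Type*} {s : Finset ι} {x : ι → ℝ} (hx : ∀ i ∈ s, 0 ≤ x i) :
    negMulLog (∑ i ∈ s, x i) ≤ ∑ i ∈ s, negMulLog (x i) := by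
  rw [negMulLog, neg_mul, sum_mul, ← sum_neg_distrib]
  refine sum_le_sum fun i hi => ?_
  rw [negMulLog, neg_mul, neg_le_neg_iff]
  rcases (hx i hi).eq_or_lt with h | h
  · simp [← h]
  · exact mul_le_mul_of_nonneg_left (log_le_log h (single_le_sum hx hi)) h.le

lemma entropy_comp_le [Fintype β] [Fintype γ] {p : α → ℝ} (hp : ∀ a, 0 ≤ p a) (f : α → β)
    (g : β → γ) : entropy p (fun a => g (f a)) ≤ entropy p f :=
  calc entropy p (fun a => g (f a))
      = ∑ c, negMulLog (∑ b with g b = c, pushforward p f b) := by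
        simp only [entropy, pushforward_comp]
    _ ≤ ∑ c, ∑ b with g b = c, negMulLog (pushforward p f b) :=
        sum_le_sum fun c _ => negMulLog_sum_le fun b _ => pushforward_nonneg hp f b
    _ = entropy p f := sum_fiberwise _ g _

lemma entropy_congr [Fintype β] [Fintype γ] {p : α → ℝ} (hp : ∀ a, 0 ≤ p a) {f : α → β}
    {g : α → γ} (φ : γ → β) (ψ : β → γ) (hf : ∀ a, f a = φ (g a)) (hg : ∀ a, g a = ψ (f a)) :
    entropy p f = entropy p g :=
  le_antisymm (by rw [show f = _ from funext hf]; exact entropy_comp_le hp g φ)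
    (by rw [show g = _ from funext hg]; exact entropy_comp_le hp f ψ)

lemma negMulLog_le_neg_mul_log_add_sub {q r : ℝ} (hq : 0 < q) (hr : 0 < r) :
    negMulLog q ≤ -(q * log r) + (r - q) := by
  have h := mul_le_mul_of_nonneg_left (log_le_sub_one_of_pos (div_pos hr hq)) hq.le
  have e : q * (r / q - 1) = r - q := by field_simp
  rw [log_div hr.ne' hq.ne', e] at h
  rw [negMulLog]
  linarith

-- Gibbs' inequality for `q` against the product of its marginals, `a y * b z / m`.
lemma sum_sum_negMulLog_add_negMulLog_le [Fintype β] [Fintype γ] (q : β → γ → ℝ)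
    (hq : ∀ y z, 0 ≤ q y z) :
    ∑ y, ∑ z, negMulLog (q y z) + negMulLog (∑ y, ∑ z, q y z) ≤
      ∑ y, negMulLog (∑ z, q y z) + ∑ z, negMulLog (∑ y, q y z) := by
  set a := fun y => ∑ z, q y z
  set b := fun z => ∑ y, q y z
  set m := ∑ y, ∑ z, q y z with hm_def
  have hterm : ∀ y z, negMulLog (q y z) ≤
      -(q y z * log (a y)) - q y z * log (b z) + q y z * log m + (a y * b z / m - q y z) := by
    intro y z
    rcases (hq y z).eq_or_lt with h | h
    · rw [← h]
      simp only [negMulLog_zero, zero_mul, neg_zero, sub_zero, add_zero, zero_add]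
      exact div_nonneg (mul_nonneg (sum_nonneg fun _ _ => hq _ _) (sum_nonneg fun _ _ => hq _ _))
        (sum_nonneg fun _ _ => sum_nonneg fun _ _ => hq _ _)
    · have ha_pos : 0 < a y := h.trans_le (single_le_sum (fun z _ => hq y z) (mem_univ z))
      have hb_pos : 0 < b z := h.trans_le (single_le_sum (fun y _ => hq y z) (mem_univ y))
      have hm_pos : 0 < m :=
        ha_pos.trans_le (single_le_sum (fun y _ => sum_nonneg fun z _ => hq y z) (mem_univ y))
      have := negMulLog_le_neg_mul_log_add_sub h (by positivity : 0 < a y * b z / m)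
      rw [log_div (by positivity) hm_pos.ne', log_mul ha_pos.ne' hb_pos.ne'] at this
      linarith
  have ha_log : ∑ y, ∑ z, q y z * log (a y) = ∑ y, a y * log (a y) := by
    simp only [← sum_mul]; rfl
  have hb_log : ∑ y, ∑ z, q y z * log (b z) = ∑ z, b z * log (b z) := by
    rw [sum_comm]; simp only [← sum_mul]; rfl
  have hm_log : ∑ y, ∑ z, q y z * log m = m * log m := by
    simp only [← sum_mul]; rfl
  have hprod : ∑ y, ∑ z, a y * b z / m = m := by
    have hmb : m = ∑ z, b z := sum_comm
    simp_rw [← sum_div, ← mul_sum, ← sum_mul, ← hmb]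
    exact mul_self_div_self m
  calc ∑ y, ∑ z, negMulLog (q y z) + negMulLog m
      ≤ ∑ y, ∑ z, (-(q y z * log (a y)) - q y z * log (b z) + q y z * log m
          + (a y * b z / m - q y z)) + negMulLog m := by
        gcongr with y _ z _; exact hterm y z
    _ = ∑ y, negMulLog (a y) + ∑ z, negMulLog (b z) := by
        simp only [sum_add_distrib, sum_sub_distrib, sum_neg_distrib, ha_log, hb_log, hm_log,
          hprod, negMulLog, neg_mul, ← hm_def]
        ring

-- The weights need not sum to one, so that this applies to the slices of `entropy_pair_eq_sum`.
lemma entropy_pair_add_negMulLog_le [Fintype β] [Fintype γ] {p : α → ℝ} (hp : ∀ a, 0 ≤ p a)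
    (f : α → β) (g : α → γ) :
    entropy p (fun a => (f a, g a)) + negMulLog (∑ a, p a) ≤ entropy p f + entropy p g := by
  have h := sum_sum_negMulLog_add_negMulLog_le
    (fun y z => pushforward p (fun a => (f a, g a)) (y, z)) fun _ _ => pushforward_nonneg hp _ _
  simp only [sum_pushforward_pair_right, sum_pushforward_pair_left, sum_pushforward] at h
  rwa [entropy, Fintype.sum_prod_type]

lemma entropy_pair_eq_sum [Fintype β] [Fintype γ] (p : α → ℝ) (f : α → β) (c : α → γ) :
    entropy p (fun a => (f a, c a)) = ∑ w, entropy (fun a => if c a = w then p a else 0) f := by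
  rw [entropy, Fintype.sum_prod_type, sum_comm]
  simp only [entropy, pushforward, sum_filter, Prod.mk.injEq, ite_and]

lemma entropy_submodular [Fintype β] [Fintype γ] [Fintype δ] {p : α → ℝ} (hp : ∀ a, 0 ≤ p a)
    (f : α → β) (g : α → γ) (c : α → δ) :
    entropy p (fun a => ((f a, g a), c a)) + entropy p c ≤
      entropy p (fun a => (f a, c a)) + entropy p (fun a => (g a, c a)) := by
  have hc : entropy p c = ∑ w, negMulLog (∑ a, if c a = w then p a else 0) := by
    simp only [entropy, pushforward, sum_filter]
  rw [entropy_pair_eq_sum p (fun a => (f a, g a)), entropy_pair_eq_sum p f,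
    entropy_pair_eq_sum p g, hc, ← sum_add_distrib, ← sum_add_distrib]
  refine sum_le_sum fun w _ => entropy_pair_add_negMulLog_le (fun a => ?_) f g
  split_ifs
  exacts [hp a, le_rfl]

lemma condEntropy_comp_le [Fintype β] [Fintype γ] [Fintype δ] {p : α → ℝ} (hp : ∀ a, 0 ≤ p a)
    (f : α → β) (φ : β → γ) (c : α → δ) :
    condEntropy p (fun a => φ (f a)) c ≤ condEntropy p f c := by
  have h : entropy p (fun a => (φ (f a), c a)) ≤ entropy p (fun a => (f a, c a)) :=
    entropy_comp_le hp (fun a => (f a, c a)) (Prod.map φ id)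
  rw [condEntropy, condEntropy]
  linarith

lemma condEntropy_le_condEntropy_comp [Fintype β] [Fintype γ] [Fintype δ] {p : α → ℝ}
    (hp : ∀ a, 0 ≤ p a) (f : α → β) (c : α → γ) (ψ : γ → δ) :
    condEntropy p f c ≤ condEntropy p f (fun a => ψ (c a)) := by
  have h := entropy_submodular hp f c (fun a => ψ (c a))
  have hfc : entropy p (fun a => ((f a, c a), ψ (c a))) = entropy p (fun a => (f a, c a)) :=
    entropy_congr hp (fun t => (t, ψ t.2)) Prod.fst (fun _ => rfl) (fun _ => rfl)
  have hc : entropy p (fun a => (c a, ψ (c a))) = entropy p c :=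
    entropy_congr hp (fun x => (x, ψ x)) Prod.fst (fun _ => rfl) (fun _ => rfl)
  rw [condEntropy, condEntropy]
  linarith

lemma condEntropy_pair_le [Fintype β] [Fintype γ] [Fintype δ] {p : α → ℝ} (hp : ∀ a, 0 ≤ p a)
    (f : α → β) (g : α → γ) (c : α → δ) :
    condEntropy p (fun a => (f a, g a)) c ≤ condEntropy p f c + condEntropy p g c := by
  have h : condEntropy p f (fun a => (g a, c a)) ≤ condEntropy p f c :=
    condEntropy_le_condEntropy_comp hp f (fun a => (g a, c a)) Prod.snd
  have hassoc : entropy p (fun a => ((f a, g a), c a)) = entropy p (fun a => (f a, g a, c a)) :=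
    entropy_congr hp (fun t => ((t.1, t.2.1), t.2.2)) (fun t => (t.1.1, t.1.2, t.2))
      (fun _ => rfl) (fun _ => rfl)
  rw [condEntropy, condEntropy, condEntropy] at *
  linarith

lemma condEntropy_pi_le_sum [Fintype β] [Fintype γ] {p : α → ℝ} (hp : ∀ a, 0 ≤ p a) {m : ℕ}
    (F : α → Fin m → β) (c : α → γ) :
    condEntropy p F c ≤ ∑ i, condEntropy p (fun a => F a i) c := by
  induction m with
  | zero =>
    have h : entropy p (fun a => (F a, c a)) = entropy p c :=
      entropy_congr hp (fun x => (Fin.elim0, x)) Prod.snd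
        (fun a => Prod.ext (Subsingleton.elim _ _) rfl) (fun _ => rfl)
    simp [condEntropy, h]
  | succ m ih =>
    have hcons : condEntropy p F c = condEntropy p (fun a => (F a 0, Fin.tail (F a))) c := by
      rw [condEntropy, condEntropy, entropy_congr hp (fun t => (Fin.cons t.1.1 t.1.2, t.2))
        (fun t => ((t.1 0, Fin.tail t.1), t.2)) (fun a => by simp) (fun _ => rfl)]
    calc condEntropy p F c
        ≤ condEntropy p (fun a => F a 0) c + condEntropy p (fun a => Fin.tail (F a)) c :=
          hcons ▸ condEntropy_pair_le hp _ _ c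
      _ ≤ condEntropy p (fun a => F a 0) c + ∑ i : Fin m, condEntropy p (fun a => F a i.succ) c :=
          add_le_add le_rfl (ih fun a => Fin.tail (F a))
      _ = ∑ i, condEntropy p (fun a => F a i) c :=
          (Fin.sum_univ_succ fun i => condEntropy p (fun a => F a i) c).symm

-- With `Y = φ ∘ Q` and `U = ψ ∘ X`:
-- `I(B; Q | Y, U) ≤ I(B, X; Q | Y, U) = I(X; Q | Y, U) ≤ I(X; Q) = 0`, the middle step because
-- `H(B | Y, X) = 0`.
lemma condEntropy_le_of_determined_of_indep [Fintype β] [Fintype κ] [Fintype ξ] [Fintype η]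
    [Fintype υ] {p : α → ℝ} (hp : ∀ a, 0 ≤ p a) (hp1 : ∑ a, p a = 1) (B : α → β) (Q : α → κ)
    (X : α → ξ) (φ : κ → η) (ψ : ξ → υ) (hdet : condEntropy p B (fun a => (φ (Q a), X a)) = 0)
    (hind : mutualInfo p Q X = 0) :
    condEntropy p B (fun a => (φ (Q a), ψ (X a))) ≤
      condEntropy p B (fun a => (Q a, ψ (X a))) := by
  have hsub := entropy_submodular hp X Q (fun a => (B a, φ (Q a), ψ (X a)))
  have hBQX : entropy p (fun a => ((X a, Q a), B a, φ (Q a), ψ (X a))) =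
      entropy p (fun a => (B a, Q a, X a)) :=
    entropy_congr hp (fun t => ((t.2.2, t.2.1), t.1, φ t.2.1, ψ t.2.2))
      (fun t => (t.2.1, t.1.2, t.1.1)) (fun _ => rfl) (fun _ => rfl)
  have hBYX : entropy p (fun a => (X a, B a, φ (Q a), ψ (X a))) =
      entropy p (fun a => (B a, φ (Q a), X a)) :=
    entropy_congr hp (fun t => (t.2.2, t.1, t.2.1, ψ t.2.2)) (fun t => (t.2.1, t.2.2.1, t.1))
      (fun _ => rfl) (fun _ => rfl)
  have hBQU : entropy p (fun a => (Q a, B a, φ (Q a), ψ (X a))) =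
      entropy p (fun a => (B a, Q a, ψ (X a))) :=
    entropy_congr hp (fun t => (t.2.1, t.1, φ t.2.1, t.2.2)) (fun t => (t.2.1, t.1, t.2.2.2))
      (fun _ => rfl) (fun _ => rfl)
  have hQX_le : entropy p (fun a => (Q a, X a)) ≤ entropy p (fun a => (B a, Q a, X a)) :=
    entropy_comp_le hp (fun a => (B a, Q a, X a)) Prod.snd
  have hYX_le := entropy_pair_add_negMulLog_le hp (fun a => φ (Q a)) X
  rw [hp1, negMulLog_one, add_zero] at hYX_le
  have hsubQ := entropy_submodular hp (fun a => ψ (X a)) Q (fun a => φ (Q a))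
  have hQU : entropy p (fun a => ((ψ (X a), Q a), φ (Q a))) =
      entropy p (fun a => (Q a, ψ (X a))) :=
    entropy_congr hp (fun t => ((t.2, t.1), φ t.1)) (fun t => (t.1.2, t.1.1)) (fun _ => rfl)
      (fun _ => rfl)
  have hYU : entropy p (fun a => (ψ (X a), φ (Q a))) = entropy p (fun a => (φ (Q a), ψ (X a))) :=
    entropy_congr hp Prod.swap Prod.swap (fun _ => rfl) (fun _ => rfl)
  have hQ : entropy p (fun a => (Q a, φ (Q a))) = entropy p Q :=
    entropy_congr hp (fun q => (q, φ q)) Prod.fst (fun _ => rfl) (fun _ => rfl)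
  rw [condEntropy] at hdet
  rw [mutualInfo] at hind
  rw [condEntropy, condEntropy]
  linarith

lemma condEntropy_pi_le_mul_of_determined_of_indep [Fintype β] [Fintype κ] [Fintype ξ]
    [Fintype υ] {N : ℕ} {p p' : α → ℝ} (hp : ∀ a, 0 ≤ p a) (hp' : ∀ a, 0 ≤ p' a)
    (hp1 : ∑ a, p a = 1) (A : α → Fin N → β) (Q : α → Fin N → κ) (X : α → ξ) (ψ : ξ → υ)
    (hdet : ∀ n, condEntropy p (fun a => A a n) (fun a => (Q a n, X a)) = 0)
    (hind : mutualInfo p Q X = 0)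
    (hlaw : ∀ n, pushforward p' (fun a => (A a n, Q a n, X a)) =
      pushforward p (fun a => (A a n, Q a n, X a))) :
    condEntropy p' A (fun a => (Q a, ψ (X a))) ≤
      N * condEntropy p A (fun a => (Q a, ψ (X a))) :=
  calc condEntropy p' A (fun a => (Q a, ψ (X a)))
      ≤ ∑ n, condEntropy p' (fun a => A a n) (fun a => (Q a, ψ (X a))) :=
        condEntropy_pi_le_sum hp' A fun a => (Q a, ψ (X a))
    _ ≤ ∑ n, condEntropy p' (fun a => A a n) (fun a => (Q a n, ψ (X a))) :=
        sum_le_sum fun n _ => condEntropy_le_condEntropy_comp hp' (fun a => A a n)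
          (fun a => (Q a, ψ (X a))) fun t => (t.1 n, t.2)
    _ = ∑ n, condEntropy p (fun a => A a n) (fun a => (Q a n, ψ (X a))) :=
        sum_congr rfl fun n _ =>
          condEntropy_comp_eq_of_pushforward_eq (hlaw n) Prod.fst fun t => (t.2.1, ψ t.2.2)
    _ ≤ ∑ n, condEntropy p (fun a => A a n) (fun a => (Q a, ψ (X a))) :=
        sum_le_sum fun n _ =>
          condEntropy_le_of_determined_of_indep hp hp1 (fun a => A a n) Q X (fun q => q n) ψ
            (hdet n) hind
    _ ≤ ∑ _n : Fin N, condEntropy p A (fun a => (Q a, ψ (X a))) :=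
        sum_le_sum fun n _ => condEntropy_comp_le hp A (fun v => v n) fun a => (Q a, ψ (X a))
    _ = N * condEntropy p A (fun a => (Q a, ψ (X a))) := by simp

end FiniteEntropy

open FiniteEntropy

section Law

variable {Ω S β γ 𝒲 : Type*} [MeasurableSpace Ω]

lemma DMeasurable.prodMk [Finite S] [Finite β] {Y : Ω → S} {Z : Ω → β} (hY : DMeasurable Y)
    (hZ : DMeasurable Z) : DMeasurable fun ω => (Y ω, Z ω) := by
  intro s
  have h : (fun ω => (Y ω, Z ω)) ⁻¹' s = ⋃ t ∈ s, Y ⁻¹' {t.1} ∩ Z ⁻¹' {t.2} := by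
    ext ω; simp
  rw [h]
  exact s.toFinite.measurableSet_biUnion fun t _ => (hY _).inter (hZ _)

lemma DMeasurable.pi {ι : Type*} [Finite ι] [Finite S] {Y : ι → Ω → S}
    (hY : ∀ i, DMeasurable (Y i)) : DMeasurable fun ω i => Y i ω := by
  intro s
  have h : (fun ω i => Y i ω) ⁻¹' s = ⋃ v ∈ s, ⋂ i, Y i ⁻¹' {v i} := by
    ext ω
    simp only [Set.mem_preimage, Set.mem_iUnion, Set.mem_iInter, Set.mem_singleton_iff,
      ← funext_iff, exists_prop, exists_eq_right']
  rw [h]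
  exact s.toFinite.measurableSet_biUnion fun v _ => MeasurableSet.iInter fun i => hY i _

noncomputable def law (ν : Measure Ω) (Y : Ω → S) (s : S) : ℝ :=
  ν.real (Y ⁻¹' {s})

lemma law_nonneg (ν : Measure Ω) (Y : Ω → S) (s : S) : 0 ≤ law ν Y s :=
  measureReal_nonneg

lemma sum_law [Fintype S] (ν : Measure Ω) [IsProbabilityMeasure ν] {T : Ω → S}
    (hT : DMeasurable T) : ∑ s, law ν T s = 1 := by
  simp only [law]
  rw [sum_measureReal_preimage_singleton _ fun s _ => hT {s}]
  simp

lemma law_comp [Fintype S] (ν : Measure Ω) [IsFiniteMeasure ν] {T : Ω → S} (hT : DMeasurable T)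
    (f : S → β) : law ν (fun ω => f (T ω)) = pushforward (law ν T) f := by
  funext b
  simp only [law, pushforward]
  rw [sum_measureReal_preimage_singleton _ fun s _ => hT {s}]
  congr 1
  ext ω
  simp

lemma law_cond_eq_of_rvIndep (μ : Measure Ω) [IsFiniteMeasure μ] {Y : Ω → S} {W : Ω → 𝒲}
    (hY : rvIndep μ Y W) (hW : DMeasurable W) {w : 𝒲} (hw : μ (W ⁻¹' {w}) ≠ 0) :
    law μ[|W ⁻¹' {w}] Y = law μ Y := by
  funext s
  rw [law, law, measureReal_def, measureReal_def, cond_apply (hW {w}), Set.inter_comm, hY s w,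
    mul_left_comm, ENNReal.inv_mul_cancel hw (measure_ne_top _ _), mul_one]

lemma rvH_comp_s5 [Fintype S] [Fintype β] (ν : Measure Ω) [IsFiniteMeasure ν] {T : Ω → S}
    (hT : DMeasurable T) (f : S → β) : rvH ν (fun ω => f (T ω)) = entropy (law ν T) f := by
  rw [entropy, ← law_comp ν hT f]
  rfl

lemma rvCondH_comp [Fintype S] [Fintype β] [Fintype γ] (ν : Measure Ω) [IsFiniteMeasure ν]
    {T : Ω → S} (hT : DMeasurable T) (f : S → β) (g : S → γ) :
    rvCondH ν (fun ω => f (T ω)) (fun ω => g (T ω)) = condEntropy (law ν T) f g := by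
  rw [rvCondH, condEntropy, rvH_comp_s5 ν hT (fun s => (f s, g s)), rvH_comp_s5 ν hT g]

lemma rvMI_comp [Fintype S] [Fintype β] [Fintype γ] (ν : Measure Ω) [IsFiniteMeasure ν]
    {T : Ω → S} (hT : DMeasurable T) (f : S → β) (g : S → γ) :
    rvMI ν (fun ω => f (T ω)) (fun ω => g (T ω)) = mutualInfo (law ν T) f g := by
  rw [rvMI, mutualInfo, rvH_comp_s5 ν hT (fun s => (f s, g s)), rvH_comp_s5 ν hT f, rvH_comp_s5 ν hT g]

end Law

/-- inequalities (47)–(52) of the converse proof: under privacy, determinism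
and query independence, for any subset `U` of message indices and any two demands `w, w'`,
`H((A_1,…,A_N) | ((Q_1,…,Q_N), X_U) ; μ[|W = w]) ≥
 (1/N) · H((A_1,…,A_N) | ((Q_1,…,Q_N), X_U) ; μ[|W = w'])`. -/
theorem stmt5 {Ω : Type*} [MeasurableSpace Ω] (μ : Measure Ω) [IsProbabilityMeasure μ]
    {𝒜 𝒬 𝒳 𝒲 : Type*} [Fintype 𝒜] [Fintype 𝒬] [Fintype 𝒳] [Fintype 𝒲]
    {N K : ℕ} (hN : 1 ≤ N)
    (A : Fin N → Ω → 𝒜) (Q : Fin N → Ω → 𝒬) (X : Fin K → Ω → 𝒳) (W : Ω → 𝒲)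
    (hAm : ∀ n, DMeasurable (A n)) (hQm : ∀ n, DMeasurable (Q n))
    (hXm : ∀ i, DMeasurable (X i)) (hWm : DMeasurable W)
    (hWpos : ∀ w : 𝒲, 0 < μ (W ⁻¹' {w}))
    (hpriv : ∀ n, rvIndep μ (fun ω => (A n ω, Q n ω, fun i : Fin K => X i ω)) W)
    (hdet : ∀ n (w : 𝒲),
      rvCondH (μ[|W ⁻¹' {w}]) (A n) (fun ω => (Q n ω, fun i : Fin K => X i ω)) = 0)
    (hqi : ∀ w : 𝒲,
      rvMI (μ[|W ⁻¹' {w}]) (fun ω (m : Fin N) => Q m ω) (fun ω (i : Fin K) => X i ω) = 0)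
    (U : Finset (Fin K)) (w w' : 𝒲) :
    (1 / (N : ℝ)) *
        rvCondH (μ[|W ⁻¹' {w'}]) (fun ω (n : Fin N) => A n ω)
          (fun ω => ((fun n : Fin N => Q n ω), fun i : U => X i.1 ω)) ≤
      rvCondH (μ[|W ⁻¹' {w}]) (fun ω (n : Fin N) => A n ω)
        (fun ω => ((fun n : Fin N => Q n ω), fun i : U => X i.1 ω)) := by
  have hν : ∀ w, IsProbabilityMeasure μ[|W ⁻¹' {w}] :=
    fun w => cond_isProbabilityMeasure (hWpos w).ne'
  let T : Ω → (Fin N → 𝒜) × (Fin N → 𝒬) × (Fin K → 𝒳) :=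
    fun ω => ((fun n => A n ω), (fun n => Q n ω), fun i => X i ω)
  have hT : DMeasurable T :=
    (DMeasurable.pi hAm).prodMk ((DMeasurable.pi hQm).prodMk (DMeasurable.pi hXm))
  have key := condEntropy_pi_le_mul_of_determined_of_indep (p := law μ[|W ⁻¹' {w}] T)
    (p' := law μ[|W ⁻¹' {w'}] T) (law_nonneg _ _) (law_nonneg _ _) (sum_law _ hT) Prod.fst
    (fun v => v.2.1) (fun v => v.2.2) (fun x (i : U) => x i)
    (fun n => (rvCondH_comp _ hT _ _).symm.trans (hdet n w))
    ((rvMI_comp _ hT _ _).symm.trans (hqi w))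
    (fun n => by
      rw [← law_comp _ hT, ← law_comp _ hT, law_cond_eq_of_rvIndep μ (hpriv n) hWm (hWpos w).ne',
        law_cond_eq_of_rvIndep μ (hpriv n) hWm (hWpos w').ne'])
  rw [← rvCondH_comp _ hT, ← rvCondH_comp _ hT] at key
  rw [one_div, inv_mul_le_iff₀ (by exact_mod_cast hN)]
  exact key
end

section
/- Let A, Q, Y, Z be finitely-valued random variables on a probability space (Ω, μ). If H(Y | (A, Q, Z)) = 0, H(A | (Q, Y, Z)) = 0, and I(Q ; (Y, Z)) = 0, then H(A | (Q, Z)) = H(Y | Z). -/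
open MeasureTheory ProbabilityTheory

lemma meas_comp {Ω : Type*} [MeasurableSpace Ω] (μ : Measure Ω) [IsProbabilityMeasure μ]
    {S T : Type*} [Fintype S] [DecidableEq T]
    (V : Ω → S) (hV : DMeasurable V) (f : S → T) (t : T) :
    (μ ((fun ω => f (V ω)) ⁻¹' {t})).toReal
      = ∑ s : S, if f s = t then (μ (V ⁻¹' {s})).toReal else 0 := by
  classical
  have hset : (fun ω => f (V ω)) ⁻¹' {t}
      = ⋃ s ∈ Finset.univ.filter (fun s => f s = t), V ⁻¹' {s} := by
    ext ω
    simp [Set.mem_preimage, eq_comm]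
  rw [hset, measure_biUnion_finset ?_ (fun s _ => hV {s})]
  · rw [ENNReal.toReal_sum (fun s _ => measure_ne_top μ _), Finset.sum_filter]
  · intro a ha b hb hab
    exact Set.disjoint_left.2 (fun ω h1 h2 => hab (by
      simp only [Set.mem_preimage, Set.mem_singleton_iff] at h1 h2
      rw [← h1, ← h2]))

lemma rvH_comp_s6 {Ω : Type*} [MeasurableSpace Ω] (μ : Measure Ω) [IsProbabilityMeasure μ]
    {S T : Type*} [Fintype S] [Fintype T] [DecidableEq T]
    (V : Ω → S) (hV : DMeasurable V) (f : S → T) :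
    rvH μ (fun ω => f (V ω))
      = ∑ t : T, Real.negMulLog (∑ s : S, if f s = t then (μ (V ⁻¹' {s})).toReal else 0) := by
  unfold rvH
  exact Finset.sum_congr rfl fun t _ => by rw [meas_comp μ V hV f t]
lemma rvH_relabel {Ω : Type*} [MeasurableSpace Ω] {S T : Type*} [Fintype S] [Fintype T]
    (μ : Measure Ω) (X : Ω → S) (f : S → T) (hf : Function.Injective f) :
    rvH μ (fun ω => f (X ω)) = rvH μ X := by
  classical
  unfold rvH
  calc ∑ t : T, Real.negMulLog ((μ ((fun ω => f (X ω)) ⁻¹' {t})).toReal)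
      = ∑ t ∈ Finset.univ.image f,
          Real.negMulLog ((μ ((fun ω => f (X ω)) ⁻¹' {t})).toReal) := by
        refine (Finset.sum_subset (Finset.subset_univ _) ?_).symm
        intro t _ ht
        have hempty : (fun ω => f (X ω)) ⁻¹' {t} = ∅ := by
          ext ω
          simp only [Set.mem_preimage, Set.mem_singleton_iff, Set.mem_empty_iff_false,
            iff_false]
          intro h
          exact ht (Finset.mem_image.2 ⟨X ω, Finset.mem_univ _, h⟩)
        rw [hempty]
        simp
    _ = ∑ s : S, Real.negMulLog ((μ ((fun ω => f (X ω)) ⁻¹' {f s})).toReal) :=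
        Finset.sum_image (fun a _ b _ h => hf h)
    _ = ∑ s : S, Real.negMulLog ((μ (X ⁻¹' {s})).toReal) := by
        refine Finset.sum_congr rfl fun s _ => ?_
        have hset : (fun ω => f (X ω)) ⁻¹' {f s} = X ⁻¹' {s} := by
          ext ω
          simp [hf.eq_iff]
        rw [hset]
lemma key_ineq {a b c d : ℝ} (ha : 0 ≤ a) (hab : a ≤ b) (hac : a ≤ c) (hbd : b ≤ d) :
    a - b * c / d ≤ a * Real.log a + a * Real.log d - a * Real.log b - a * Real.log c := by
  rcases eq_or_lt_of_le ha with h | h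
  · have hb : 0 ≤ b := le_trans ha hab
    have hc : 0 ≤ c := le_trans ha hac
    have hd : 0 ≤ d := le_trans hb hbd
    rw [← h]
    simp only [zero_mul, zero_sub, sub_zero, add_zero, neg_zero, zero_add]
    have : 0 ≤ b * c / d := by positivity
    linarith
  · have hb : 0 < b := lt_of_lt_of_le h hab
    have hc : 0 < c := lt_of_lt_of_le h hac
    have hd : 0 < d := lt_of_lt_of_le hb hbd
    have hx : (0:ℝ) < b * c / (a * d) := by positivity
    have hlog := Real.log_le_sub_one_of_pos hx
    rw [Real.log_div (by positivity) (by positivity), Real.log_mul (ne_of_gt hb) (ne_of_gt hc),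
      Real.log_mul (ne_of_gt h) (ne_of_gt hd)] at hlog
    have hmul := mul_le_mul_of_nonneg_left hlog (le_of_lt h)
    have he : a * (b * c / (a * d) - 1) = b * c / d - a := by
      field_simp
    nlinarith [hmul, he]

-- sum reordering helpers
lemma sum3_zqy {𝒬 𝒴 𝒵 : Type*} [Fintype 𝒬] [Fintype 𝒴] [Fintype 𝒵] (f : 𝒬 → 𝒴 → 𝒵 → ℝ) :
    ∑ q : 𝒬, ∑ y : 𝒴, ∑ z : 𝒵, f q y z = ∑ z : 𝒵, ∑ q : 𝒬, ∑ y : 𝒴, f q y z := by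
  calc ∑ q : 𝒬, ∑ y : 𝒴, ∑ z : 𝒵, f q y z
      = ∑ q : 𝒬, ∑ z : 𝒵, ∑ y : 𝒴, f q y z := Finset.sum_congr rfl fun q _ => Finset.sum_comm
    _ = ∑ z : 𝒵, ∑ q : 𝒬, ∑ y : 𝒴, f q y z := Finset.sum_comm

lemma sum_mul_neg {ι : Type*} [Fintype ι] (f : ι → ℝ) (L : ℝ) :
    -((∑ y, f y) * L) = ∑ y, -(f y * L) := by
  rw [Finset.sum_mul, ← Finset.sum_neg_distrib]

lemma negMulLog_sum_expand {𝒴 : Type*} [Fintype 𝒴] (f : 𝒴 → ℝ) :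
    Real.negMulLog (∑ y, f y) = ∑ y, -(f y * Real.log (∑ y', f y')) := by
  rw [Real.negMulLog, neg_mul]
  exact sum_mul_neg f _

lemma condMI_nonneg {𝒬 𝒴 𝒵 : Type*} [Fintype 𝒬] [Fintype 𝒴] [Fintype 𝒵]
    (p : 𝒬 → 𝒴 → 𝒵 → ℝ) (hp : ∀ q y z, 0 ≤ p q y z)
    (hsum : ∑ q : 𝒬, ∑ y : 𝒴, ∑ z : 𝒵, p q y z = 1) :
    ∑ z : 𝒵, Real.negMulLog (∑ q : 𝒬, ∑ y : 𝒴, p q y z)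
      + ∑ q : 𝒬, ∑ y : 𝒴, ∑ z : 𝒵, Real.negMulLog (p q y z)
    ≤ (∑ q : 𝒬, ∑ z : 𝒵, Real.negMulLog (∑ y : 𝒴, p q y z))
      + ∑ y : 𝒴, ∑ z : 𝒵, Real.negMulLog (∑ q : 𝒬, p q y z) := by
  classical
  set pqz : 𝒬 → 𝒵 → ℝ := fun q z => ∑ y, p q y z with hpqz
  set pyz : 𝒴 → 𝒵 → ℝ := fun y z => ∑ q, p q y z with hpyz
  set pz : 𝒵 → ℝ := fun z => ∑ q, ∑ y, p q y z with hpz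
  have hpqz0 : ∀ q z, 0 ≤ pqz q z := fun q z => Finset.sum_nonneg fun y _ => hp q y z
  have hpyz0 : ∀ y z, 0 ≤ pyz y z := fun y z => Finset.sum_nonneg fun q _ => hp q y z
  have hpz0 : ∀ z, 0 ≤ pz z := fun z => Finset.sum_nonneg fun q _ => hpqz0 q z
  -- expansions
  have e1 : ∑ q, ∑ z, Real.negMulLog (pqz q z)
      = ∑ q, ∑ y, ∑ z, -(p q y z * Real.log (pqz q z)) := by
    refine Finset.sum_congr rfl fun q _ => ?_
    calc ∑ z, Real.negMulLog (pqz q z)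
        = ∑ z, ∑ y, -(p q y z * Real.log (pqz q z)) :=
          Finset.sum_congr rfl fun z _ => negMulLog_sum_expand (fun y => p q y z)
      _ = ∑ y, ∑ z, -(p q y z * Real.log (pqz q z)) := Finset.sum_comm
  have e2 : ∑ y, ∑ z, Real.negMulLog (pyz y z)
      = ∑ q, ∑ y, ∑ z, -(p q y z * Real.log (pyz y z)) := by
    calc ∑ y, ∑ z, Real.negMulLog (pyz y z)
        = ∑ y, ∑ z, ∑ q, -(p q y z * Real.log (pyz y z)) :=
          Finset.sum_congr rfl fun y _ => Finset.sum_congr rfl fun z _ =>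
            negMulLog_sum_expand (fun q => p q y z)
      _ = ∑ y, ∑ q, ∑ z, -(p q y z * Real.log (pyz y z)) :=
          Finset.sum_congr rfl fun y _ => Finset.sum_comm
      _ = ∑ q, ∑ y, ∑ z, -(p q y z * Real.log (pyz y z)) := Finset.sum_comm
  have e3 : ∑ z, Real.negMulLog (pz z)
      = ∑ q, ∑ y, ∑ z, -(p q y z * Real.log (pz z)) := by
    rw [sum3_zqy]
    refine Finset.sum_congr rfl fun z _ => ?_
    rw [hpz]
    rw [negMulLog_sum_expand (fun q => ∑ y, p q y z)]
    refine Finset.sum_congr rfl fun q _ => ?_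
    exact sum_mul_neg (fun y => p q y z) _
  have e4 : ∑ q, ∑ y, ∑ z, Real.negMulLog (p q y z)
      = ∑ q, ∑ y, ∑ z, -(p q y z * Real.log (p q y z)) := by
    simp only [Real.negMulLog, neg_mul]
  -- termwise inequality
  have hterm : ∀ q y z, p q y z - pqz q z * pyz y z / pz z
      ≤ -(p q y z * Real.log (pqz q z)) + -(p q y z * Real.log (pyz y z))
        - -(p q y z * Real.log (p q y z)) - -(p q y z * Real.log (pz z)) := by
    intro q y z
    have hab : p q y z ≤ pqz q z :=
      Finset.single_le_sum (fun y' _ => hp q y' z) (Finset.mem_univ y)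
    have hac : p q y z ≤ pyz y z :=
      Finset.single_le_sum (fun q' _ => hp q' y z) (Finset.mem_univ q)
    have hbd : pqz q z ≤ pz z :=
      Finset.single_le_sum (fun q' _ => hpqz0 q' z) (Finset.mem_univ q)
    have := key_ineq (hp q y z) hab hac hbd
    linarith
  -- sum of termwise bound
  have hmain : ∑ q, ∑ y, ∑ z, (p q y z - pqz q z * pyz y z / pz z)
      ≤ ∑ q, ∑ y, ∑ z,
        (-(p q y z * Real.log (pqz q z)) + -(p q y z * Real.log (pyz y z))
          - -(p q y z * Real.log (p q y z)) - -(p q y z * Real.log (pz z))) :=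
    Finset.sum_le_sum fun q _ => Finset.sum_le_sum fun y _ =>
      Finset.sum_le_sum fun z _ => hterm q y z
  have hsplit : ∑ q, ∑ y, ∑ z,
        (-(p q y z * Real.log (pqz q z)) + -(p q y z * Real.log (pyz y z))
          - -(p q y z * Real.log (p q y z)) - -(p q y z * Real.log (pz z)))
      = (∑ q, ∑ y, ∑ z, -(p q y z * Real.log (pqz q z)))
        + (∑ q, ∑ y, ∑ z, -(p q y z * Real.log (pyz y z)))
        - (∑ q, ∑ y, ∑ z, -(p q y z * Real.log (p q y z)))
        - (∑ q, ∑ y, ∑ z, -(p q y z * Real.log (pz z))) := by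
    simp only [Finset.sum_add_distrib, Finset.sum_sub_distrib]
  have hlhs : ∑ q, ∑ y, ∑ z, (p q y z - pqz q z * pyz y z / pz z)
      = 1 - ∑ q, ∑ y, ∑ z, pqz q z * pyz y z / pz z := by
    simp only [Finset.sum_sub_distrib]
    rw [hsum]
  have hbound : ∑ q, ∑ y, ∑ z, pqz q z * pyz y z / pz z ≤ 1 := by
    rw [sum3_zqy]
    have hz1 : ∑ z, pz z = 1 := by rw [hpz]; rw [← sum3_zqy]; exact hsum
    calc ∑ z, ∑ q, ∑ y, pqz q z * pyz y z / pz z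
        = ∑ z, (∑ q, pqz q z) * (∑ y, pyz y z) / pz z := by
          refine Finset.sum_congr rfl fun z _ => ?_
          rw [Finset.sum_mul_sum, Finset.sum_div]
          exact Finset.sum_congr rfl fun q _ => by rw [Finset.sum_div]
      _ ≤ ∑ z, pz z := by
          refine Finset.sum_le_sum fun z _ => ?_
          have h1 : ∑ q, pqz q z = pz z := rfl
          have h2 : ∑ y, pyz y z = pz z := Finset.sum_comm
          rw [h1, h2]
          rcases eq_or_lt_of_le (hpz0 z) with h | h
          · rw [← h]; simp
          · rw [mul_div_assoc, div_self (ne_of_gt h), mul_one]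
      _ = 1 := hz1
  linarith [hmain, hsplit, hlhs, hbound, e1, e2, e3, e4]

lemma MI_nonneg {𝒬 𝒴 : Type*} [Fintype 𝒬] [Fintype 𝒴]
    (p : 𝒬 → 𝒴 → ℝ) (hp : ∀ q y, 0 ≤ p q y)
    (hsum : ∑ q : 𝒬, ∑ y : 𝒴, p q y = 1) :
    ∑ q : 𝒬, ∑ y : 𝒴, Real.negMulLog (p q y)
      ≤ (∑ q : 𝒬, Real.negMulLog (∑ y : 𝒴, p q y))
        + ∑ y : 𝒴, Real.negMulLog (∑ q : 𝒬, p q y) := by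
  have h := condMI_nonneg (fun q y (_ : Unit) => p q y) (fun q y _ => hp q y)
    (by simpa using hsum)
  simpa [hsum] using h

lemma core_glue {𝒬 𝒴 𝒵 : Type*} [Fintype 𝒬] [Fintype 𝒴] [Fintype 𝒵]
    (p : 𝒬 → 𝒴 → 𝒵 → ℝ) (hp : ∀ q y z, 0 ≤ p q y z)
    (hsum : ∑ q : 𝒬, ∑ y : 𝒴, ∑ z : 𝒵, p q y z = 1)
    (HQ HZ HQZ HYZ HV : ℝ)
    (hHQ : HQ = ∑ q : 𝒬, Real.negMulLog (∑ y : 𝒴, ∑ z : 𝒵, p q y z))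
    (hHZ : HZ = ∑ z : 𝒵, Real.negMulLog (∑ q : 𝒬, ∑ y : 𝒴, p q y z))
    (hHQZ : HQZ = ∑ q : 𝒬, ∑ z : 𝒵, Real.negMulLog (∑ y : 𝒴, p q y z))
    (hHYZ : HYZ = ∑ y : 𝒴, ∑ z : 𝒵, Real.negMulLog (∑ q : 𝒬, p q y z))
    (hHV : HV = ∑ q : 𝒬, ∑ y : 𝒴, ∑ z : 𝒵, Real.negMulLog (p q y z))
    (hqi : HQ + HYZ = HV) : HQZ = HQ + HZ := by
  have i1 := condMI_nonneg p hp hsum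
  have hswap : ∀ q, ∑ z : 𝒵, ∑ y : 𝒴, p q y z = ∑ y : 𝒴, ∑ z : 𝒵, p q y z :=
    fun q => Finset.sum_comm
  have hsum2 : ∑ q : 𝒬, ∑ z : 𝒵, ∑ y : 𝒴, p q y z = 1 := by
    rw [Finset.sum_congr rfl fun q _ => hswap q]; exact hsum
  have i2 := MI_nonneg (fun q z => ∑ y : 𝒴, p q y z)
    (fun q z => Finset.sum_nonneg fun y _ => hp q y z) hsum2
  have hQeq : ∑ q : 𝒬, Real.negMulLog (∑ z : 𝒵, ∑ y : 𝒴, p q y z)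
      = ∑ q : 𝒬, Real.negMulLog (∑ y : 𝒴, ∑ z : 𝒵, p q y z) :=
    Finset.sum_congr rfl fun q _ => by rw [hswap q]
  rw [hQeq] at i2
  linarith [i1, i2, hHQ ▸ le_refl HQ]

set_option maxHeartbeats 1000000 in
/-- equations (54)–(58) of the converse proof: if `H(Y | (A, Q, Z)) = 0`,
`H(A | (Q, Y, Z)) = 0`, and `I(Q ; (Y, Z)) = 0`, then `H(A | (Q, Z)) = H(Y | Z)`. -/
theorem stmt6 {Ω : Type*} [MeasurableSpace Ω] (μ : Measure Ω) [IsProbabilityMeasure μ]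
    {𝒜 𝒬 𝒴 𝒵 : Type*} [Fintype 𝒜] [Fintype 𝒬] [Fintype 𝒴] [Fintype 𝒵]
    (A : Ω → 𝒜) (Q : Ω → 𝒬) (Y : Ω → 𝒴) (Z : Ω → 𝒵)
    (hAm : DMeasurable A) (hQm : DMeasurable Q) (hYm : DMeasurable Y) (hZm : DMeasurable Z)
    (hrec : rvCondH μ Y (fun ω => (A ω, Q ω, Z ω)) = 0)
    (hdet : rvCondH μ A (fun ω => (Q ω, Y ω, Z ω)) = 0)
    (hqi : rvMI μ Q (fun ω => (Y ω, Z ω)) = 0) :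
    rvCondH μ A (fun ω => (Q ω, Z ω)) = rvCondH μ Y Z := by

  classical
  simp only [rvCondH, rvMI] at hrec hdet hqi ⊢
  -- measurability of the joint variable (Q,Y,Z)
  have hVm : DMeasurable (fun ω => (Q ω, Y ω, Z ω)) := by
    intro s
    have hset : (fun ω => (Q ω, Y ω, Z ω)) ⁻¹' s
        = ⋃ x ∈ s, (Q ⁻¹' {x.1} ∩ (Y ⁻¹' {x.2.1} ∩ Z ⁻¹' {x.2.2})) := by
      ext ω
      simp only [Set.mem_preimage, Set.mem_iUnion, Set.mem_inter_iff, Set.mem_singleton_iff]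
      constructor
      · intro h; exact ⟨(Q ω, Y ω, Z ω), h, rfl, rfl, rfl⟩
      · rintro ⟨⟨a, b, c⟩, hx, h1, h2, h3⟩
        simp only at h1 h2 h3
        rw [h1, h2, h3]; exact hx
    rw [hset]
    exact MeasurableSet.biUnion (Set.to_countable s)
      (fun x _ => (hQm _).inter ((hYm _).inter (hZm _)))
  -- the joint pmf
  have hp : ∀ q y z, 0 ≤ (μ ((fun ω => (Q ω, Y ω, Z ω)) ⁻¹' {(q, y, z)})).toReal :=
    fun _ _ _ => ENNReal.toReal_nonneg
  have hsum : ∑ q : 𝒬, ∑ y : 𝒴, ∑ z : 𝒵,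
      (μ ((fun ω => (Q ω, Y ω, Z ω)) ⁻¹' {(q, y, z)})).toReal = 1 := by
    have h := meas_comp μ (fun ω => (Q ω, Y ω, Z ω)) hVm (fun _ => ()) ()
    have h2 : ((fun _ : Ω => ()) ⁻¹' ({()} : Set Unit)) = Set.univ :=
      Set.eq_univ_of_forall (fun ω => rfl)
    simp only [h2, measure_univ, ENNReal.toReal_one, Fintype.sum_prod_type] at h
    simpa using h.symm
  -- entropy expansions
  have HVe : rvH μ (fun ω => (Q ω, Y ω, Z ω)) = ∑ q : 𝒬, ∑ y : 𝒴, ∑ z : 𝒵,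
      Real.negMulLog ((μ ((fun ω => (Q ω, Y ω, Z ω)) ⁻¹' {(q, y, z)})).toReal) := by
    unfold rvH
    simp only [Fintype.sum_prod_type]
  have HQe : rvH μ Q = ∑ q : 𝒬, Real.negMulLog (∑ y : 𝒴, ∑ z : 𝒵,
      (μ ((fun ω => (Q ω, Y ω, Z ω)) ⁻¹' {(q, y, z)})).toReal) := by
    have h : rvH μ Q = _ := rvH_comp_s6 μ (fun ω => (Q ω, Y ω, Z ω)) hVm (fun s => s.1)
    rw [h]
    refine Finset.sum_congr rfl fun q _ => ?_
    congr 1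
    rw [Fintype.sum_prod_type, Finset.sum_comm]
    simp [Finset.sum_ite_eq', Fintype.sum_prod_type]
  have HZe : rvH μ Z = ∑ z : 𝒵, Real.negMulLog (∑ q : 𝒬, ∑ y : 𝒴,
      (μ ((fun ω => (Q ω, Y ω, Z ω)) ⁻¹' {(q, y, z)})).toReal) := by
    have h : rvH μ Z = _ := rvH_comp_s6 μ (fun ω => (Q ω, Y ω, Z ω)) hVm (fun s => s.2.2)
    rw [h]
    refine Finset.sum_congr rfl fun z _ => ?_
    congr 1
    simp [Fintype.sum_prod_type, Prod.ext_iff, ite_and, Finset.sum_ite_irrel, Finset.sum_ite_eq']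
  have HQZe : rvH μ (fun ω => (Q ω, Z ω)) = ∑ q : 𝒬, ∑ z : 𝒵, Real.negMulLog (∑ y : 𝒴,
      (μ ((fun ω => (Q ω, Y ω, Z ω)) ⁻¹' {(q, y, z)})).toReal) := by
    have h : rvH μ (fun ω => (Q ω, Z ω)) = _ :=
      rvH_comp_s6 μ (fun ω => (Q ω, Y ω, Z ω)) hVm (fun s => (s.1, s.2.2))
    rw [h, Fintype.sum_prod_type]
    refine Finset.sum_congr rfl fun q _ => Finset.sum_congr rfl fun z _ => ?_
    congr 1
    rw [Fintype.sum_prod_type, Finset.sum_comm]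
    simp [Prod.ext_iff, ite_and, Finset.sum_ite_eq', Fintype.sum_prod_type]
  have HYZe : rvH μ (fun ω => (Y ω, Z ω)) = ∑ y : 𝒴, ∑ z : 𝒵, Real.negMulLog (∑ q : 𝒬,
      (μ ((fun ω => (Q ω, Y ω, Z ω)) ⁻¹' {(q, y, z)})).toReal) := by
    have h : rvH μ (fun ω => (Y ω, Z ω)) = _ :=
      rvH_comp_s6 μ (fun ω => (Q ω, Y ω, Z ω)) hVm (fun s => (s.2.1, s.2.2))
    rw [h, Fintype.sum_prod_type]
    refine Finset.sum_congr rfl fun y _ => Finset.sum_congr rfl fun z _ => ?_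
    congr 1
    rw [Fintype.sum_prod_type]
    simp [Finset.sum_ite_eq']
  -- from the hypotheses: H(A,Q,Z) = H(Q,Y,Z)
  have hfinj : Function.Injective
      (fun x : 𝒜 × 𝒬 × 𝒴 × 𝒵 => ((x.2.2.1, x.1, x.2.1, x.2.2.2) : 𝒴 × 𝒜 × 𝒬 × 𝒵)) := by
    rintro ⟨a, q, y, z⟩ ⟨a', q', y', z'⟩ h
    simp_all [Prod.ext_iff]
  have hrel : rvH μ (fun ω => (Y ω, A ω, Q ω, Z ω))
      = rvH μ (fun ω => (A ω, Q ω, Y ω, Z ω)) :=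
    rvH_relabel μ (fun ω => (A ω, Q ω, Y ω, Z ω)) _ hfinj
  -- main equality from core_glue
  have hcore : rvH μ (fun ω => (Q ω, Z ω)) = rvH μ Q + rvH μ Z := by
    rw [HQZe, HQe, HZe]
    exact core_glue _ hp hsum _ _ _ _ _ rfl rfl rfl rfl rfl
      (by rw [← HQe, ← HYZe, ← HVe]; linarith [hqi])
  linarith [hrec, hdet, hqi, hrel, hcore]
end
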